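/- arXiv:2009.01498 — 7 statements merged into one kernel-verified Lean document; each statement's English description precedes it below -/
import Mathlib

section
/- If x is a fixed point of the generalized Physarum dynamics (i.e., for all e either x_e = 0 or ‖Λ_e‖_2 = 1), then the network cost equals the dissipated energy: C(x) = Σ_e c_e x_e = Σ_e Σ_i (c_e/x_e) Q_{e,i}^2 = Tr(B^T P) = E(x). -/
open Matrix

/-- At a fixed point of the generalized Physarum dynamics, the network cost equals the
dissipated energy: Σ_e c_e x_e = Σ_e Σ_i (c_e/x_e) Q_{e,i}² = Tr(BᵀP). -/
theorem fixed_point_cost_eq_energy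
    (n m k : ℕ) (A : Matrix (Fin n) (Fin m) ℝ) (B : Matrix (Fin n) (Fin k) ℝ)
    (c : Fin m → ℝ) (hc : ∀ e, 0 < c e)
    (x : Fin m → ℝ) (hx : ∀ e, 0 ≤ x e)
    (P : Matrix (Fin n) (Fin k) ℝ)
    (hP : A * Matrix.diagonal (fun e => x e / c e) * Aᵀ * P = B)
    (Λ Q : Matrix (Fin m) (Fin k) ℝ)
    (hΛ : Λ = Matrix.diagonal (fun e => (c e)⁻¹) * (Aᵀ * P))
    (hQ : Q = Matrix.diagonal x * Λ)
    (hfix : ∀ e, x e = 0 ∨ Real.sqrt (∑ i, Λ e i ^ 2) = 1) :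
    ∑ e, c e * x e = ∑ e, ∑ i, (c e / x e) * Q e i ^ 2 ∧
    ∑ e, ∑ i, (c e / x e) * Q e i ^ 2 = Matrix.trace (Bᵀ * P) := by
  set M : Matrix (Fin m) (Fin k) ℝ := Aᵀ * P with hM
  have hΛ' : ∀ e i, Λ e i = (c e)⁻¹ * M e i := by
    intro e i; rw [hΛ]; simp [Matrix.diagonal_mul]
  have hQ' : ∀ e i, Q e i = x e * Λ e i := by
    intro e i; rw [hQ]; simp [Matrix.diagonal_mul]
  have key : ∀ e, ∑ i, (c e / x e) * Q e i ^ 2 = c e * x e := by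
    intro e
    rcases hfix e with h0 | h1
    · simp [h0]
    · have hs : (∑ i, Λ e i ^ 2) = 1 := by
        have hnn : (0:ℝ) ≤ ∑ i, Λ e i ^ 2 := Finset.sum_nonneg fun i _ => sq_nonneg _
        nlinarith [Real.sq_sqrt hnn, h1]
      rcases eq_or_ne (x e) 0 with hx0 | hx0
      · simp [hx0]
      · have : ∀ i, (c e / x e) * Q e i ^ 2 = c e * x e * Λ e i ^ 2 := by
          intro i; rw [hQ' e i]; field_simp
        rw [Finset.sum_congr rfl fun i _ => this i, ← Finset.mul_sum, hs, mul_one]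
  have key2 : ∀ e, ∑ i, (c e / x e) * Q e i ^ 2 = ∑ i, (x e / c e) * M e i ^ 2 := by
    intro e
    refine Finset.sum_congr rfl fun i _ => ?_
    rw [hQ' e i, hΛ' e i]
    rcases eq_or_ne (x e) 0 with hx0 | hx0
    · simp [hx0]
    · have hc0 := (hc e).ne'
      field_simp
  have hB : Bᵀ * P = Mᵀ * (Matrix.diagonal (fun e => x e / c e) * M) := by
    rw [← hP, hM]
    simp only [Matrix.transpose_mul, Matrix.diagonal_transpose, Matrix.transpose_transpose,
      Matrix.mul_assoc]
  have htr : Matrix.trace (Bᵀ * P) = ∑ e, ∑ i, (x e / c e) * M e i ^ 2 := by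
    rw [hB]
    simp only [Matrix.trace, Matrix.diag, Matrix.mul_apply, Matrix.transpose_apply,
      Matrix.diagonal_apply, ite_mul, zero_mul, Finset.sum_ite_eq, Finset.mem_univ, if_true]
    rw [Finset.sum_comm]
    refine Finset.sum_congr rfl fun e _ => Finset.sum_congr rfl fun i _ => ?_
    ring
  constructor
  · exact (Finset.sum_congr rfl fun e _ => (key e).symm)
  · rw [htr]; exact Finset.sum_congr rfl fun e _ => key2 e
end

section
/- For the Lyapunov function L(x) = (1/2)(c^T x + Σ_i (b^i)^T p^i(x)), where p^i(x) solves L(x)p^i = b^i, the partial derivative with respect to x_e is ∂L/∂x_e = (c_e/2)(1 − ‖Λ_e‖_2^2), where Λ_e is the e-th row of C^{-1} A^T P. -/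
open Matrix Filter
open scoped Topology

lemma key_id {n m k : ℕ} (A : Matrix (Fin n) (Fin m) ℝ)
    (d : Fin m → ℝ) (P Z : Matrix (Fin n) (Fin k) ℝ) :
    ∑ e, d e * ∑ i, (Aᵀ * Z) e i * (Aᵀ * P) e i
      = Matrix.trace ((A * Matrix.diagonal d * Aᵀ * P)ᵀ * Z) := by
  have h1 : (A * Matrix.diagonal d * Aᵀ * P)ᵀ * Z
      = (Aᵀ * P)ᵀ * (Matrix.diagonal d * (Aᵀ * Z)) := by
    simp only [Matrix.transpose_mul, Matrix.diagonal_transpose, Matrix.transpose_transpose]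
    noncomm_ring [Matrix.mul_assoc]
  rw [h1]
  simp only [Matrix.trace, Matrix.diag, Matrix.mul_apply, Matrix.transpose_apply,
    Matrix.diagonal_apply, ite_mul, zero_mul, Finset.sum_ite_eq, Finset.mem_univ, if_true]
  rw [Finset.sum_comm]
  refine Finset.sum_congr rfl fun e _ => ?_
  rw [Finset.mul_sum]
  refine Finset.sum_congr rfl fun i _ => ?_
  ring

lemma preimage_bound {n m : ℕ} (M : Matrix (Fin m) (Fin n) ℝ) :
    ∃ C > 0, ∀ v : Fin m → ℝ, v ∈ LinearMap.range M.mulVecLin →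
      ∃ s : Fin n → ℝ, M *ᵥ s = v ∧ ‖s‖ ≤ C * ‖v‖ := by
  set T := M.mulVecLin
  set E := LinearMap.range T
  let f : (Fin n → ℝ) →L[ℝ] E := LinearMap.toContinuousLinearMap T.rangeRestrict
  have hsurj : Function.Surjective f := LinearMap.surjective_rangeRestrict T
  obtain ⟨C, hC0, hC⟩ := f.exists_preimage_norm_le hsurj
  refine ⟨C, hC0, fun v hv => ?_⟩
  obtain ⟨s, hs1, hs2⟩ := hC ⟨v, hv⟩
  refine ⟨s, ?_, ?_⟩
  · have := congrArg (Subtype.val) hs1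
    simpa [f, T] using this
  · simpa using hs2

set_option maxHeartbeats 1600000 in
/-- Gradient of the Lyapunov function ℒ(x) = ½(cᵀx + Tr(Bᵀ P(x))):
∂ℒ/∂x_e = (c_e/2)(1 − ‖Λ_e‖₂²), where Λ = C⁻¹AᵀP(x). -/
theorem gradient_of_Lyapunov
    (n m k : ℕ) (A : Matrix (Fin n) (Fin m) ℝ) (B : Matrix (Fin n) (Fin k) ℝ)
    (c : Fin m → ℝ) (hc : ∀ e, 0 < c e)
    (x : Fin m → ℝ) (hx : ∀ e, 0 < x e)
    (Pot : (Fin m → ℝ) → Matrix (Fin n) (Fin k) ℝ)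
    (hPot : ∀ y : Fin m → ℝ, (∀ e, 0 < y e) →
      A * Matrix.diagonal (fun e => y e / c e) * Aᵀ * Pot y = B) :
    HasFDerivAt
      (fun y : Fin m → ℝ => (1 / 2) * (∑ e, c e * y e + Matrix.trace (Bᵀ * Pot y)))
      (∑ e, ((c e / 2) * (1 - ∑ i, ((c e)⁻¹ * (Aᵀ * Pot x) e i) ^ 2)) •
        (ContinuousLinearMap.proj e : (Fin m → ℝ) →L[ℝ] ℝ))
      x := by
  classical
  -- abbreviations
  set q : (Fin m → ℝ) → Matrix (Fin m) (Fin k) ℝ := fun y => Aᵀ * Pot y with hqdef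
  set S : (Fin m → ℝ) → Fin m → ℝ := fun y e => ∑ i, (q y) e i ^ 2 with hSdef
  set F : (Fin m → ℝ) → ℝ := fun y => Matrix.trace (Bᵀ * Pot y) with hFdef
  -- key trace identity
  have key : ∀ y, (∀ e, 0 < y e) → ∀ Z : Matrix (Fin n) (Fin k) ℝ,
      ∑ e, (y e / c e) * ∑ i, (Aᵀ * Z) e i * q y e i = Matrix.trace (Bᵀ * Z) := by
    intro y hy Z
    have := key_id A (fun e => y e / c e) (Pot y) Z
    rw [hPot y hy] at this
    exact this
  -- F y as a weighted sum of squares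
  have hFs : ∀ y, (∀ e, 0 < y e) → F y = ∑ e, (y e / c e) * S y e := by
    intro y hy
    have hFy : F y = Matrix.trace (Bᵀ * Pot y) := rfl
    rw [hFy, ← key y hy (Pot y)]
    refine Finset.sum_congr rfl fun e _ => ?_
    have hSy : S y e = ∑ i, q y e i ^ 2 := rfl
    rw [hSy]
    congr 1
    refine Finset.sum_congr rfl fun i _ => ?_
    rw [sq]
  -- cross identities
  have cross1 : ∀ y, (∀ e, 0 < y e) →
      ∑ e, (y e / c e) * ∑ i, q x e i * q y e i = F x := fun y hy => key y hy (Pot x)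
  have cross2 : ∀ y, (∀ e, 0 < y e) →
      ∑ e, (x e / c e) * ∑ i, q y e i * q x e i = F y := fun y hy => key x hx (Pot y)
  -- expansion of squares
  have expand : ∀ (w : Fin m → ℝ) (M N : Matrix (Fin m) (Fin k) ℝ),
      ∑ e, w e * ∑ i, (M e i - N e i) ^ 2
        = (∑ e, w e * ∑ i, M e i ^ 2) + (∑ e, w e * ∑ i, N e i ^ 2)
          - 2 * ∑ e, w e * ∑ i, N e i * M e i := by
    intro w M N
    have hi : ∀ e, ∑ i, (M e i - N e i) ^ 2
        = (∑ i, M e i ^ 2) + (∑ i, N e i ^ 2) - 2 * ∑ i, N e i * M e i := by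
      intro e
      rw [← Finset.sum_add_distrib, Finset.mul_sum, ← Finset.sum_sub_distrib]
      exact Finset.sum_congr rfl fun i _ => by ring
    calc ∑ e, w e * ∑ i, (M e i - N e i) ^ 2
        = ∑ e, (w e * ((∑ i, M e i ^ 2) + (∑ i, N e i ^ 2) - 2 * ∑ i, N e i * M e i)) :=
          Finset.sum_congr rfl fun e _ => by rw [hi e]
      _ = (∑ e, w e * ∑ i, M e i ^ 2) + (∑ e, w e * ∑ i, N e i ^ 2)
          - 2 * ∑ e, w e * ∑ i, N e i * M e i := by
          rw [← Finset.sum_add_distrib, Finset.mul_sum, ← Finset.sum_sub_distrib]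
          exact Finset.sum_congr rfl fun e _ => by ring
  -- the two fundamental inequalities
  have ineq1 : ∀ y, (∀ e, 0 < y e) →
      0 ≤ F y + (∑ e, (y e / c e) * S x e) - 2 * F x := by
    intro y hy
    have h0 : 0 ≤ ∑ e, (y e / c e) * ∑ i, (q y e i - q x e i) ^ 2 :=
      Finset.sum_nonneg fun e _ => mul_nonneg (div_nonneg (hy e).le (hc e).le)
        (Finset.sum_nonneg fun i _ => sq_nonneg _)
    rw [expand (fun e => y e / c e) (q y) (q x), cross1 y hy, ← hFs y hy] at h0
    simpa [hSdef] using h0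
  have ineq2 : ∀ y, (∀ e, 0 < y e) →
      0 ≤ (∑ e, (x e / c e) * S y e) + F x - 2 * F y := by
    intro y hy
    have h0 : 0 ≤ ∑ e, (x e / c e) * ∑ i, (q x e i - q y e i) ^ 2 :=
      Finset.sum_nonneg fun e _ => mul_nonneg (div_nonneg (hx e).le (hc e).le)
        (Finset.sum_nonneg fun i _ => sq_nonneg _)
    rw [expand (fun e => x e / c e) (q x) (q y), cross2 y hy, ← hFs x hx] at h0
    have hsy : (∑ e, x e / c e * ∑ i, (q y) e i ^ 2) = ∑ e, x e / c e * S y e := by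
      refine Finset.sum_congr rfl fun e _ => ?_
      rw [hSdef]
    linarith [h0, hsy]
  -- the sandwich for Δ y := F y - F x + ∑ ((y-x)/c) S x
  have sandwich : ∀ y, (∀ e, 0 < y e) →
      0 ≤ F y - F x + (∑ e, ((y e - x e) / c e) * S x e) ∧
      F y - F x + (∑ e, ((y e - x e) / c e) * S x e)
        ≤ ∑ e, ((x e - y e) / c e) * (S y e - S x e) := by
    intro y hy
    have h1 : (∑ e, ((y e - x e) / c e) * S x e)
        = (∑ e, (y e / c e) * S x e) - ∑ e, (x e / c e) * S x e := by
      rw [← Finset.sum_sub_distrib]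
      exact Finset.sum_congr rfl fun e _ => by ring
    have h2 : (∑ e, ((x e - y e) / c e) * (S y e - S x e))
        = ((∑ e, (x e / c e) * S y e) - (∑ e, (y e / c e) * S y e))
          - ((∑ e, (x e / c e) * S x e) - ∑ e, (y e / c e) * S x e) := by
      rw [← Finset.sum_sub_distrib, ← Finset.sum_sub_distrib, ← Finset.sum_sub_distrib]
      exact Finset.sum_congr rfl fun e _ => by ring
    have hFx := hFs x hx
    have hFy := hFs y hy
    constructor
    · have := ineq1 y hy; linarith
    · have := ineq2 y hy; linarith
  -- coordinatewise consequence of hPot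
  have hB : ∀ z, (∀ e, 0 < z e) → ∀ (j : Fin n) (i : Fin k),
      ∑ e, A j e * (z e / c e) * q z e i = B j i := by
    intro z hz j i
    have h2 : (A * Matrix.diagonal (fun e => z e / c e)) * (Aᵀ * Pot z) = B := by
      rw [← Matrix.mul_assoc]; exact hPot z hz
    rw [← h2, Matrix.mul_apply]
    refine Finset.sum_congr rfl fun e _ => ?_
    rw [Matrix.mul_diagonal]
  -- Lipschitz-type bound for q near x
  obtain ⟨C, hC0, hCs⟩ := preimage_bound (Aᵀ)
  set K1 : ℝ := ∑ j : Fin n, ∑ e, ∑ i, |A j e| * |q x e i| / c e with hK1def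
  have hK1nn : 0 ≤ K1 := Finset.sum_nonneg fun j _ => Finset.sum_nonneg fun e _ =>
    Finset.sum_nonneg fun i _ => div_nonneg (mul_nonneg (abs_nonneg _) (abs_nonneg _)) (hc e).le
  set μ : ℝ := ∑ e, 2 * c e / x e with hμdef
  have hμnn : 0 ≤ μ := Finset.sum_nonneg fun e _ => div_nonneg (mul_nonneg (by norm_num) (hc e).le) (hx e).le
  set K2 : ℝ := μ * ((n : ℝ) * (C * K1)) with hK2def
  have hK2nn : 0 ≤ K2 := mul_nonneg hμnn (mul_nonneg (Nat.cast_nonneg n)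
    (mul_nonneg hC0.le hK1nn))
  have cont : ∀ y, (∀ e, 0 < y e) → (∀ e, x e / 2 ≤ y e) →
      ∀ e i, |q y e i - q x e i| ≤ K2 * ‖y - x‖ := by
    intro y hy hy2 e i
    set r : Fin m → ℝ := fun e' => q y e' i - q x e' i with hrdef
    have hmem : r ∈ LinearMap.range (Matrix.mulVecLin (Aᵀ)) := by
      refine ⟨(fun j => Pot y j i - Pot x j i), ?_⟩
      funext e'
      simp only [Matrix.mulVecLin_apply, Matrix.mulVec, dotProduct, hrdef, hqdef,
        Matrix.mul_apply, Matrix.transpose_apply, mul_sub, Finset.sum_sub_distrib]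
    obtain ⟨s, hs1, hs2⟩ := hCs r hmem
    have hAs : ∀ e', ∑ j, A j e' * s j = r e' := by
      intro e'
      have h := congrFun hs1 e'
      simpa [Matrix.mulVec, dotProduct, Matrix.transpose_apply] using h
    set E : Fin n → ℝ := fun j => ∑ e', A j e' * ((x e' - y e') / c e') * q x e' i with hEdef
    have hEr : ∀ j, E j = ∑ e', A j e' * (y e' / c e') * r e' := by
      intro j
      have hbx := hB x hx j i
      have hby := hB y hy j i
      calc E j = (∑ e', A j e' * (x e' / c e') * q x e' i)
            - ∑ e', A j e' * (y e' / c e') * q x e' i := by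
            show (∑ e', A j e' * ((x e' - y e') / c e') * q x e' i) = _
            rw [← Finset.sum_sub_distrib]
            exact Finset.sum_congr rfl fun e' _ => by ring
        _ = (∑ e', A j e' * (y e' / c e') * q y e' i)
            - ∑ e', A j e' * (y e' / c e') * q x e' i := by rw [hbx, hby]
        _ = ∑ e', A j e' * (y e' / c e') * r e' := by
            rw [← Finset.sum_sub_distrib]
            exact Finset.sum_congr rfl fun e' _ => by simp only [hrdef]; ring
    have heq : ∑ j, s j * E j = ∑ e', (y e' / c e') * r e' ^ 2 := by
      calc ∑ j, s j * E j = ∑ j, ∑ e', s j * (A j e' * (y e' / c e') * r e') := by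
            refine Finset.sum_congr rfl fun j _ => ?_
            rw [hEr j, Finset.mul_sum]
        _ = ∑ e', ∑ j, s j * (A j e' * (y e' / c e') * r e') := Finset.sum_comm
        _ = ∑ e', (y e' / c e') * r e' ^ 2 := by
            refine Finset.sum_congr rfl fun e' _ => ?_
            have h : ∑ j, s j * (A j e' * (y e' / c e') * r e')
                = (∑ j, A j e' * s j) * ((y e' / c e') * r e') := by
              rw [Finset.sum_mul]
              exact Finset.sum_congr rfl fun j _ => by ring
            rw [h, hAs e']
            ring
    have hEb : ∀ j, |E j| ≤ K1 * ‖y - x‖ := by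
      intro j
      have h0 : |E j| ≤ ∑ e', |A j e' * ((x e' - y e') / c e') * q x e' i| := by
        simp only [hEdef]; exact Finset.abs_sum_le_sum_abs _ _
      have h1 : ∀ e', |A j e' * ((x e' - y e') / c e') * q x e' i|
          ≤ (|A j e'| * |q x e' i| / c e') * ‖y - x‖ := by
        intro e'
        have hxy : |x e' - y e'| ≤ ‖y - x‖ := by
          have h2 : |x e' - y e'| = ‖(y - x) e'‖ := by
            rw [Pi.sub_apply, Real.norm_eq_abs, abs_sub_comm]
          exact h2 ▸ norm_le_pi_norm (y - x) e'
        rw [abs_mul, abs_mul, abs_div, abs_of_pos (hc e')]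
        calc |A j e'| * (|x e' - y e'| / c e') * |q x e' i|
            ≤ |A j e'| * (‖y - x‖ / c e') * |q x e' i| := by
              have hd : |x e' - y e'| / c e' ≤ ‖y - x‖ / c e' :=
                (div_le_div_iff_of_pos_right (hc e')).2 hxy
              exact mul_le_mul_of_nonneg_right
                (mul_le_mul_of_nonneg_left hd (abs_nonneg _)) (abs_nonneg _)
          _ = (|A j e'| * |q x e' i| / c e') * ‖y - x‖ := by ring
      calc |E j| ≤ ∑ e', (|A j e'| * |q x e' i| / c e') * ‖y - x‖ :=
            h0.trans (Finset.sum_le_sum fun e' _ => h1 e')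
        _ = (∑ e', |A j e'| * |q x e' i| / c e') * ‖y - x‖ := by rw [Finset.sum_mul]
        _ ≤ K1 * ‖y - x‖ := by
            refine mul_le_mul_of_nonneg_right ?_ (norm_nonneg _)
            have hin : ∀ e', |A j e'| * |q x e' i| / c e'
                ≤ ∑ i', |A j e'| * |q x e' i'| / c e' := fun e' =>
              Finset.single_le_sum (f := fun i' => |A j e'| * |q x e' i'| / c e')
                (fun i' _ => div_nonneg (mul_nonneg (abs_nonneg _) (abs_nonneg _)) (hc e').le)
                (Finset.mem_univ i)
            calc (∑ e', |A j e'| * |q x e' i| / c e')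
                ≤ ∑ e', ∑ i', |A j e'| * |q x e' i'| / c e' :=
                  Finset.sum_le_sum fun e' _ => hin e'
              _ ≤ K1 := Finset.single_le_sum
                  (f := fun j => ∑ e', ∑ i', |A j e'| * |q x e' i'| / c e')
                  (fun j' _ => Finset.sum_nonneg fun e' _ => Finset.sum_nonneg fun i' _ =>
                    div_nonneg (mul_nonneg (abs_nonneg _) (abs_nonneg _)) (hc e').le)
                  (Finset.mem_univ j)
    have hrnorm : ∀ e'', |r e''| ≤ Real.sqrt (∑ e', r e' ^ 2) := by
      intro e''
      rw [← Real.sqrt_sq_eq_abs]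
      exact Real.sqrt_le_sqrt (Finset.single_le_sum (f := fun e' => r e' ^ 2)
        (fun e' _ => sq_nonneg _) (Finset.mem_univ e''))
    set ρ := Real.sqrt (∑ e', r e' ^ 2) with hρdef
    have hρnn : 0 ≤ ρ := Real.sqrt_nonneg _
    have hrpi : ‖r‖ ≤ ρ := by
      refine (pi_norm_le_iff_of_nonneg hρnn).2 fun e'' => ?_
      rw [Real.norm_eq_abs]; exact hrnorm e''
    have hsE : ∑ j, s j * E j ≤ (n : ℝ) * ((C * ρ) * (K1 * ‖y - x‖)) := by
      calc ∑ j, s j * E j ≤ ∑ _j : Fin n, (C * ρ) * (K1 * ‖y - x‖) := by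
            refine Finset.sum_le_sum fun j _ => ?_
            have h1 : s j * E j ≤ |s j| * |E j| := by
              rw [← abs_mul]; exact le_abs_self _
            refine h1.trans ?_
            have h2 : |s j| ≤ C * ρ := by
              have h3 := norm_le_pi_norm s j
              rw [Real.norm_eq_abs] at h3
              exact h3.trans (hs2.trans (mul_le_mul_of_nonneg_left hrpi hC0.le))
            exact mul_le_mul h2 (hEb j) (abs_nonneg _)
              (mul_nonneg hC0.le hρnn)
        _ = (n : ℝ) * ((C * ρ) * (K1 * ‖y - x‖)) := by
            rw [Finset.sum_const, Finset.card_univ, Fintype.card_fin, nsmul_eq_mul]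
    have hsum2 : ρ ^ 2 ≤ μ * ((n : ℝ) * ((C * ρ) * (K1 * ‖y - x‖))) := by
      have h3 : ∑ e', r e' ^ 2 ≤ μ * ∑ e', (y e' / c e') * r e' ^ 2 := by
        rw [Finset.mul_sum]
        refine Finset.sum_le_sum fun e' _ => ?_
        have hμe : 2 * c e' / x e' ≤ μ := Finset.single_le_sum
          (f := fun e'' => 2 * c e'' / x e'')
          (fun e'' _ => div_nonneg (mul_nonneg (by norm_num) (hc e'').le) (hx e'').le)
          (Finset.mem_univ e')
        have h4 : (1 : ℝ) ≤ μ * (y e' / c e') := by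
          have h5 : x e' / (2 * c e') ≤ y e' / c e' := by
            rw [div_le_div_iff₀ (mul_pos two_pos (hc e')) (hc e')]
            nlinarith [mul_le_mul_of_nonneg_right (hy2 e') (hc e').le]
          have hxne := (hx e').ne'
          have hcne := (hc e').ne'
          calc (1 : ℝ) = (2 * c e' / x e') * (x e' / (2 * c e')) := by
                field_simp
            _ ≤ μ * (y e' / c e') :=
                mul_le_mul hμe h5 (div_nonneg (hx e').le (mul_pos two_pos (hc e')).le) hμnn
        nlinarith [sq_nonneg (r e'), h4]
      have h6 : ρ ^ 2 = ∑ e', r e' ^ 2 :=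
        Real.sq_sqrt (Finset.sum_nonneg fun e' _ => sq_nonneg _)
      rw [h6]
      calc ∑ e', r e' ^ 2 ≤ μ * ∑ e', (y e' / c e') * r e' ^ 2 := h3
        _ = μ * ∑ j, s j * E j := by rw [heq]
        _ ≤ μ * ((n : ℝ) * ((C * ρ) * (K1 * ‖y - x‖))) :=
            mul_le_mul_of_nonneg_left hsE hμnn
    have hρle : ρ ≤ K2 * ‖y - x‖ := by
      rcases hρnn.eq_or_lt with h | h
      · rw [← h]; exact mul_nonneg hK2nn (norm_nonneg _)
      · have h8 : μ * ((n : ℝ) * ((C * ρ) * (K1 * ‖y - x‖))) = (K2 * ‖y - x‖) * ρ := by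
          rw [hK2def]; ring
        have h7 : ρ * ρ ≤ (K2 * ‖y - x‖) * ρ := by
          rw [sq] at hsum2
          linarith [hsum2]
        exact le_of_mul_le_mul_right h7 h
    exact (hrnorm e).trans hρle
  -- neighborhood where everything holds
  have hnb : ∀ᶠ y in 𝓝 x, ∀ e, x e / 2 < y e := by
    have ho : IsOpen {y : Fin m → ℝ | ∀ e, x e / 2 < y e} := by
      have hset : {y : Fin m → ℝ | ∀ e, x e / 2 < y e} = ⋂ e, {y | x e / 2 < y e} := by
        ext y; simp [Set.mem_iInter]
      rw [hset]
      exact isOpen_iInter_of_finite fun e =>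
        isOpen_lt continuous_const (continuous_apply e)
    exact ho.mem_nhds fun e => half_lt_self (hx e)
  set K4 : Fin m → ℝ := fun e => K2 * ∑ i, (K2 + 2 * |q x e i|) with hK4def
  have hK4nn : ∀ e, 0 ≤ K4 e := fun e => mul_nonneg hK2nn
    (Finset.sum_nonneg fun i _ => add_nonneg hK2nn (by positivity))
  set K3 : ℝ := ∑ e, (1 / c e) * K4 e with hK3def
  have hK3nn : 0 ≤ K3 := Finset.sum_nonneg fun e _ =>
    mul_nonneg (div_nonneg zero_le_one (hc e).le) (hK4nn e)
  have keybound : ∀ᶠ y in 𝓝 x,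
      |F y - F x + ∑ e, ((y e - x e) / c e) * S x e| ≤ K3 * (‖y - x‖ * ‖y - x‖) := by
    filter_upwards [hnb, Metric.ball_mem_nhds x one_pos] with y hy1 hy2
    have hypos : ∀ e, 0 < y e := fun e => lt_trans (half_pos (hx e)) (hy1 e)
    have hyhalf : ∀ e, x e / 2 ≤ y e := fun e => (hy1 e).le
    have hyx1 : ‖y - x‖ ≤ 1 := by
      have h9 := Metric.mem_ball.1 hy2
      rw [dist_eq_norm] at h9
      exact h9.le
    obtain ⟨hlo, hhi⟩ := sandwich y hypos
    have hSb : ∀ e, |S y e - S x e| ≤ K4 e * ‖y - x‖ := by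
      intro e
      have hdiff : S y e - S x e = ∑ i, (q y e i - q x e i) * (q y e i + q x e i) := by
        have h1 : S y e = ∑ i, q y e i ^ 2 := rfl
        have h2 : S x e = ∑ i, q x e i ^ 2 := rfl
        rw [h1, h2, ← Finset.sum_sub_distrib]
        exact Finset.sum_congr rfl fun i _ => by ring
      rw [hdiff]
      calc |∑ i, (q y e i - q x e i) * (q y e i + q x e i)|
          ≤ ∑ i, |(q y e i - q x e i) * (q y e i + q x e i)| :=
            Finset.abs_sum_le_sum_abs _ _
        _ ≤ ∑ i, (K2 * (K2 + 2 * |q x e i|)) * ‖y - x‖ := by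
            refine Finset.sum_le_sum fun i _ => ?_
            rw [abs_mul]
            have h1 := cont y hypos hyhalf e i
            have h2 : |q y e i + q x e i| ≤ K2 + 2 * |q x e i| := by
              have h3 : |q y e i + q x e i| ≤ |q y e i - q x e i| + 2 * |q x e i| := by
                have h4 : q y e i + q x e i = (q y e i - q x e i) + 2 * q x e i := by ring
                rw [h4]
                refine (abs_add_le _ _).trans ?_
                rw [abs_mul, abs_two]
              have h5 : |q y e i - q x e i| ≤ K2 := by
                refine h1.trans ?_
                nlinarith [hK2nn, hyx1, norm_nonneg (y - x)]
              linarith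
            calc |q y e i - q x e i| * |q y e i + q x e i|
                ≤ (K2 * ‖y - x‖) * (K2 + 2 * |q x e i|) :=
                  mul_le_mul h1 h2 (abs_nonneg _) (mul_nonneg hK2nn (norm_nonneg _))
              _ = (K2 * (K2 + 2 * |q x e i|)) * ‖y - x‖ := by ring
        _ = K4 e * ‖y - x‖ := by
            rw [← Finset.sum_mul]
            congr 1
            exact (Finset.mul_sum _ _ _).symm
    rw [abs_of_nonneg hlo]
    refine hhi.trans ?_
    calc ∑ e, ((x e - y e) / c e) * (S y e - S x e)
        ≤ ∑ e, ((1 / c e) * K4 e) * (‖y - x‖ * ‖y - x‖) := by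
          refine Finset.sum_le_sum fun e _ => ?_
          refine (le_abs_self _).trans ?_
          rw [abs_mul, abs_div, abs_of_pos (hc e)]
          have h6 : |x e - y e| ≤ ‖y - x‖ := by
            have h7 : |x e - y e| = ‖(y - x) e‖ := by
              rw [Pi.sub_apply, Real.norm_eq_abs, abs_sub_comm]
            exact h7 ▸ norm_le_pi_norm (y - x) e
          calc (|x e - y e| / c e) * |S y e - S x e|
              ≤ (‖y - x‖ / c e) * (K4 e * ‖y - x‖) :=
                mul_le_mul ((div_le_div_iff_of_pos_right (hc e)).2 h6) (hSb e)
                  (abs_nonneg _) (div_nonneg (norm_nonneg _) (hc e).le)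
            _ = ((1 / c e) * K4 e) * (‖y - x‖ * ‖y - x‖) := by ring
      _ = K3 * (‖y - x‖ * ‖y - x‖) := by rw [← Finset.sum_mul]
  -- final assembly
  rw [hasFDerivAt_iff_isLittleO]
  have hfun : ∀ y : Fin m → ℝ,
      (1 / 2 : ℝ) * (∑ e, c e * y e + Matrix.trace (Bᵀ * Pot y))
        - (1 / 2) * (∑ e, c e * x e + Matrix.trace (Bᵀ * Pot x))
        - (∑ e, ((c e / 2) * (1 - ∑ i, ((c e)⁻¹ * (Aᵀ * Pot x) e i) ^ 2)) •
            (ContinuousLinearMap.proj e : (Fin m → ℝ) →L[ℝ] ℝ)) (y - x)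
      = (1 / 2) * (F y - F x + ∑ e, ((y e - x e) / c e) * S x e) := by
    intro y
    have happ : (∑ e, ((c e / 2) * (1 - ∑ i, ((c e)⁻¹ * (Aᵀ * Pot x) e i) ^ 2)) •
            (ContinuousLinearMap.proj e : (Fin m → ℝ) →L[ℝ] ℝ)) (y - x)
        = ∑ e, ((c e / 2) * (1 - ∑ i, ((c e)⁻¹ * (Aᵀ * Pot x) e i) ^ 2)) * (y e - x e) := by
      simp [ContinuousLinearMap.sum_apply, ContinuousLinearMap.smul_apply,
        ContinuousLinearMap.proj_apply, Pi.sub_apply]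
    rw [happ]
    rw [show Matrix.trace (Bᵀ * Pot y) = F y from rfl,
      show Matrix.trace (Bᵀ * Pot x) = F x from rfl]
    have hSx : ∀ e, (∑ i, ((c e)⁻¹ * (Aᵀ * Pot x) e i) ^ 2) = S x e * ((c e)⁻¹) ^ 2 := by
      intro e
      have h1 : S x e = ∑ i, (Aᵀ * Pot x) e i ^ 2 := rfl
      rw [h1, Finset.sum_mul]
      exact Finset.sum_congr rfl fun i _ => by ring
    simp_rw [hSx]
    have hA2 : ∑ e, (c e / 2 * (1 - S x e * ((c e)⁻¹) ^ 2)) * (y e - x e)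
        = ∑ e, ((c e / 2 * (y e - x e)) - (1 / 2) * (((y e - x e) / c e) * S x e)) := by
      refine Finset.sum_congr rfl fun e _ => ?_
      have hce := (hc e).ne'
      field_simp
    rw [hA2, Finset.sum_sub_distrib]
    have hsplit : ∑ e, (c e / 2 * (y e - x e))
        = (1 / 2) * ((∑ e, c e * y e) - ∑ e, c e * x e) := by
      rw [← Finset.sum_sub_distrib, Finset.mul_sum]
      exact Finset.sum_congr rfl fun e _ => by ring
    have hhalf : ∑ e, (1 / 2 : ℝ) * (((y e - x e) / c e) * S x e)
        = (1 / 2) * ∑ e, ((y e - x e) / c e) * S x e := (Finset.mul_sum _ _ _).symm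
    rw [hsplit, hhalf]
    ring
  simp only [hfun]
  rw [Asymptotics.isLittleO_iff]
  intro ε hε
  have hδ : 0 < ε / (K3 + 1) := div_pos hε (by linarith)
  filter_upwards [keybound, Metric.ball_mem_nhds x hδ] with y hb1 hb2
  have hd : ‖y - x‖ * (K3 + 1) < ε := by
    have h9 := Metric.mem_ball.1 hb2
    rw [dist_eq_norm] at h9
    exact (lt_div_iff₀ (by linarith)).1 h9
  rw [Real.norm_eq_abs, abs_mul]
  have h10 : |(1 / 2 : ℝ)| = 1 / 2 := by norm_num
  rw [h10]
  nlinarith [hb1, hd, hK3nn, norm_nonneg (y - x), hε, abs_nonneg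
    (F y - F x + ∑ e, ((y e - x e) / c e) * S x e),
    mul_le_mul_of_nonneg_right hd.le (norm_nonneg (y - x))]
end

section
/- The function L(x) = (1/2)(c^T x + Σ_i (b^i)^T p^i(x)) is nonincreasing along trajectories of the generalized Physarum dynamics ẋ_e = x_e(g_e(‖Λ_e‖_2) − 1): d/dt L(x(t)) = Σ_e (c_e/2)(1 − ‖Λ_e‖_2^2)·x_e(g_e(‖Λ_e‖_2) − 1) ≤ 0, with equality if and only if x(t) is a fixed point. -/
open Matrix

lemma frob_diag {m k : ℕ} (d : Fin m → ℝ) (S T : Matrix (Fin m) (Fin k) ℝ) :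
    Matrix.trace (Sᵀ * (Matrix.diagonal d * T)) = ∑ e, d e * ∑ i, S e i * T e i := by
  simp only [Matrix.trace, Matrix.diag, Matrix.mul_apply, Matrix.transpose_apply,
    Finset.mul_sum]
  rw [Finset.sum_comm]
  refine Finset.sum_congr rfl fun e _ => Finset.sum_congr rfl fun i _ => ?_
  simp [Matrix.diagonal_apply, ite_mul, mul_ite]
  ring

lemma frob_key {n m k : ℕ} (A : Matrix (Fin n) (Fin m) ℝ) (d : Fin m → ℝ)
    (Q R : Matrix (Fin n) (Fin k) ℝ) :
    Matrix.trace (Qᵀ * (A * Matrix.diagonal d * Aᵀ * R)) =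
      ∑ e, d e * ∑ i, (Aᵀ * Q) e i * (Aᵀ * R) e i := by
  have h : Qᵀ * (A * Matrix.diagonal d * Aᵀ * R)
      = (Aᵀ * Q)ᵀ * (Matrix.diagonal d * (Aᵀ * R)) := by
    simp only [Matrix.transpose_mul, Matrix.transpose_transpose, Matrix.mul_assoc]
  rw [h, frob_diag]

lemma sum_sq_sub {k : ℕ} (u v : Fin k → ℝ) :
    ∑ i, (u i - v i)^2 = (∑ i, u i * u i) - 2*(∑ i, v i * u i) + ∑ i, v i * v i := by
  rw [Finset.sum_congr rfl (fun i _ => show (u i - v i)^2 = u i*u i - 2*(v i*u i) + v i*v i by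
    ring), Finset.sum_add_distrib, Finset.sum_sub_distrib, ← Finset.mul_sum]

lemma sum_half_sub {k : ℕ} (u v : Fin k → ℝ) :
    ∑ i, (v i - u i / 2)^2
      = (∑ i, v i * v i) - (∑ i, u i * v i) + (∑ i, u i * u i)/4 := by
  rw [Finset.sum_congr rfl (fun i _ => show (v i - u i/2)^2
      = v i*v i - u i*v i + (u i*u i)/4 by ring),
    Finset.sum_add_distrib, Finset.sum_sub_distrib, ← Finset.sum_div]

lemma sum_mul_self_sub {k : ℕ} (u v : Fin k → ℝ) :
    (∑ i, u i * u i) - (∑ i, v i * v i) = ∑ i, (u i - v i)*(u i + v i) := by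
  rw [← Finset.sum_sub_distrib]
  exact Finset.sum_congr rfl fun i _ => by ring

lemma sum_add_sq_le {k : ℕ} (u v : Fin k → ℝ) :
    ∑ i, (u i + v i)^2 ≤ 2*(∑ i, u i * u i) + 2*(∑ i, v i * v i) := by
  rw [Finset.mul_sum, Finset.mul_sum, ← Finset.sum_add_distrib]
  exact Finset.sum_le_sum fun i _ => by nlinarith [sq_nonneg (u i - v i)]

lemma young_aux (cc xs dxx u v : ℝ) (hc : 0 < cc) (hxs : 0 < xs) :
    dxx / cc * ((u - v) * (u + v)) ≤ xs / (2*cc) * (u - v)^2 + dxx^2/(2*cc*xs) * (u + v)^2 := by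
  rw [← sub_nonneg]
  have key : xs / (2*cc) * (u - v)^2 + dxx^2/(2*cc*xs) * (u + v)^2 - dxx / cc * ((u - v) * (u + v))
      = (xs*(u-v) - dxx*(u+v))^2/(2*cc*xs) := by
    field_simp
    ring
  rw [key]; positivity

lemma bound_aux (cc xt xs p dx K st Ft : ℝ) (h1 : 0 < cc) (h2 : 0 < xt) (h3 : xt/2 ≤ xs)
    (h4 : 0 ≤ p) (h5 : xt * p ≤ 10*Ft*cc) (h6 : dx^2 ≤ K^2*st^2) (h7 : 0 ≤ Ft) :
    dx^2/(2*cc*xs) * p ≤ 10*K^2*Ft/xt^2 * st^2 := by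
  have hxs : 0 < xs := by linarith
  rw [div_mul_eq_mul_div, div_mul_eq_mul_div, div_le_div_iff₀ (by positivity) (by positivity)]
  have hFtcc : (0:ℝ) ≤ 10*Ft*cc := by positivity
  have hA : dx^2*(xt*p)*xt ≤ dx^2*(10*Ft*cc)*xt :=
    mul_le_mul_of_nonneg_right (mul_le_mul_of_nonneg_left h5 (sq_nonneg dx)) h2.le
  have hB : dx^2*(10*Ft*cc)*xt ≤ (K^2*st^2)*(10*Ft*cc)*xt :=
    mul_le_mul_of_nonneg_right (mul_le_mul_of_nonneg_right h6 hFtcc) h2.le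
  have hC : (K^2*st^2)*(10*Ft*cc)*xt ≤ (K^2*st^2)*(10*Ft*cc)*(2*xs) :=
    mul_le_mul_of_nonneg_left (by linarith) (by positivity)
  nlinarith [hA, hB, hC]

lemma sign_aux (g : ℝ → ℝ) (hg1 : g 1 = 1) (hmono : StrictMono g) (N : ℝ) (hN : 0 ≤ N) :
    (1 - N) * (g (Real.sqrt N) - 1) ≤ 0 ∧
    ((1 - N) * (g (Real.sqrt N) - 1) = 0 ↔ g (Real.sqrt N) - 1 = 0) := by
  have hw0 : 0 ≤ Real.sqrt N := Real.sqrt_nonneg N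
  have hw2 : Real.sqrt N ^ 2 = N := Real.sq_sqrt hN
  set w := Real.sqrt N with hw
  rcases lt_trichotomy w 1 with h | h | h
  · have h1 : g w < 1 := by have := hmono h; rwa [hg1] at this
    have h2 : N < 1 := by nlinarith
    refine ⟨by nlinarith, ?_, fun he => by rw [he, mul_zero]⟩
    intro he
    exfalso
    nlinarith [mul_pos (by linarith : (0:ℝ) < 1 - N) (by linarith : (0:ℝ) < 1 - g w)]
  · rw [h, hg1]
    norm_num
  · have h1 : 1 < g w := by have := hmono h; rwa [hg1] at this
    have h2 : 1 < N := by nlinarith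
    refine ⟨by nlinarith, ?_, fun he => by rw [he, mul_zero]⟩
    intro he
    exfalso
    nlinarith [mul_pos (by linarith : (0:ℝ) < N - 1) (by linarith : (0:ℝ) < g w - 1)]

set_option maxHeartbeats 1600000

/-- ℒ is a Lyapunov function for the generalized Physarum dynamics: along a trajectory,
d/dt ℒ(x(t)) = Σ_e (c_e/2)(1 − ‖Λ_e‖₂²)·x_e(g_e(‖Λ_e‖₂) − 1) ≤ 0, with equality iff x(t)
is a fixed point. -/
theorem Lyapunov_decreasing_generalized_dynamics
    (n m k : ℕ) (A : Matrix (Fin n) (Fin m) ℝ) (B : Matrix (Fin n) (Fin k) ℝ)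
    (c : Fin m → ℝ) (hc : ∀ e, 0 < c e)
    (g : Fin m → ℝ → ℝ)
    (hg1 : ∀ e, g e 1 = 1) (hgmono : ∀ e, StrictMono (g e))
    (hgnn : ∀ e z, 0 ≤ z → 0 ≤ g e z)
    (x : ℝ → Fin m → ℝ) (P : ℝ → Matrix (Fin n) (Fin k) ℝ)
    (hx : ∀ t e, 0 < x t e)
    (hP : ∀ t, A * Matrix.diagonal (fun e => x t e / c e) * Aᵀ * P t = B)
    (Λ : ℝ → Matrix (Fin m) (Fin k) ℝ)
    (hΛ : ∀ t, Λ t = Matrix.diagonal (fun e => (c e)⁻¹) * (Aᵀ * P t))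
    (hdyn : ∀ t e, HasDerivAt (fun s => x s e)
      (x t e * (g e (Real.sqrt (∑ i, Λ t e i ^ 2)) - 1)) t)
    (t : ℝ) (D : ℝ)
    (hD : D = ∑ e, (c e / 2) * (1 - ∑ i, Λ t e i ^ 2) *
      (x t e * (g e (Real.sqrt (∑ i, Λ t e i ^ 2)) - 1))) :
    HasDerivAt (fun s => (1 / 2) * (∑ e, c e * x s e + Matrix.trace (Bᵀ * P s))) D t ∧
    D ≤ 0 ∧
    (D = 0 ↔ ∀ e, x t e * (g e (Real.sqrt (∑ i, Λ t e i ^ 2)) - 1) = 0) := by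
  classical
  have hNnn : ∀ e, (0:ℝ) ≤ ∑ i, Λ t e i ^ 2 := fun e => Finset.sum_nonneg fun i _ => sq_nonneg _
  have hsg := fun e => sign_aux (g e) (hg1 e) (hgmono e) _ (hNnn e)
  -- sign analysis
  have hterm : ∀ e ∈ Finset.univ, (c e / 2) * (1 - ∑ i, Λ t e i ^ 2) *
      (x t e * (g e (Real.sqrt (∑ i, Λ t e i ^ 2)) - 1)) ≤ 0 := by
    intro e _
    have h := (hsg e).1
    nlinarith [mul_pos (hc e) (hx t e),
      mul_nonneg (le_of_lt (half_pos (mul_pos (hc e) (hx t e)))) (neg_nonneg.mpr h)]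
  have hDle : D ≤ 0 := hD ▸ Finset.sum_nonpos hterm
  have hDiff : D = 0 ↔ ∀ e, x t e * (g e (Real.sqrt (∑ i, Λ t e i ^ 2)) - 1) = 0 := by
    rw [hD, Finset.sum_eq_zero_iff_of_nonpos hterm]
    constructor
    · intro h e
      have h0 := h e (Finset.mem_univ e)
      rcases mul_eq_zero.mp h0 with h1 | h1
      · rcases mul_eq_zero.mp h1 with h2 | h2
        · exact absurd h2 (ne_of_gt (half_pos (hc e)))
        · have h3 : (1 - ∑ i, Λ t e i ^ 2) * (g e (Real.sqrt (∑ i, Λ t e i ^ 2)) - 1) = 0 := by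
            rw [h2, zero_mul]
          have := (hsg e).2.mp h3
          rw [this, mul_zero]
      · exact h1
    · intro h e _
      rw [h e, mul_zero]
  refine ⟨?_, hDle, hDiff⟩
  -- derivative part
  set F : ℝ → ℝ := fun s => Matrix.trace ((P s)ᵀ * B) with hFdef
  have htrace : ∀ s, Matrix.trace (Bᵀ * P s) = F s := by
    intro s
    have h : (Bᵀ * P s)ᵀ = (P s)ᵀ * B := by
      simp [Matrix.transpose_mul]
    rw [← Matrix.trace_transpose (Bᵀ * P s), h]
  have hK : ∀ s (Q : Matrix (Fin n) (Fin k) ℝ),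
      Matrix.trace (Qᵀ * B) = ∑ e, x s e / c e * ∑ i, (Aᵀ * Q) e i * (Aᵀ * P s) e i := by
    intro s Q
    conv_lhs => rw [← hP s]
    exact frob_key A _ Q (P s)
  have E1 : ∀ s, F s = ∑ e, x s e / c e * ∑ i, (Aᵀ * P s) e i * (Aᵀ * P s) e i :=
    fun s => hK s (P s)
  have E2 : ∀ s, F t = ∑ e, x s e / c e * ∑ i, (Aᵀ * P t) e i * (Aᵀ * P s) e i :=
    fun s => hK s (P t)
  have E3 : ∀ s, F s = ∑ e, x t e / c e * ∑ i, (Aᵀ * P s) e i * (Aᵀ * P t) e i :=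
    fun s => hK t (P s)
  have E3' : ∀ s, F s = ∑ e, x t e / c e * ∑ i, (Aᵀ * P t) e i * (Aᵀ * P s) e i := by
    intro s
    rw [E3 s]
    exact Finset.sum_congr rfl fun e _ => by
      rw [Finset.sum_congr rfl fun i _ => mul_comm ((Aᵀ * P s) e i) ((Aᵀ * P t) e i)]
  have hqN : ∀ e, ∑ i, (Aᵀ * P t) e i * (Aᵀ * P t) e i = c e ^ 2 * ∑ i, Λ t e i ^ 2 := by
    intro e
    rw [Finset.mul_sum]
    refine Finset.sum_congr rfl fun i _ => ?_
    have hli : Λ t e i = (c e)⁻¹ * (Aᵀ * P t) e i := by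
      rw [hΛ t]; exact Matrix.diagonal_mul _ _ e i
    rw [hli]
    have := (hc e).ne'
    field_simp
  have hFt : F t = ∑ e, c e * x t e * ∑ i, Λ t e i ^ 2 := by
    rw [E1 t]
    refine Finset.sum_congr rfl fun e _ => ?_
    rw [hqN e]
    have := (hc e).ne'
    field_simp
  have hFtnn : 0 ≤ F t := by
    rw [hFt]
    exact Finset.sum_nonneg fun e _ =>
      mul_nonneg (mul_nonneg (hc e).le (hx t e).le) (hNnn e)
  -- expansion of Dp
  have hDp : ∀ s, ∑ e, x s e / c e * ∑ i, ((Aᵀ * P s) e i - (Aᵀ * P t) e i)^2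
      = F s - 2*F t + ∑ e, c e * x s e * ∑ i, Λ t e i ^ 2 := by
    intro s
    have hper : ∀ e, x s e / c e * ∑ i, ((Aᵀ * P s) e i - (Aᵀ * P t) e i)^2
        = x s e / c e * ∑ i, (Aᵀ * P s) e i * (Aᵀ * P s) e i
          - 2*(x s e / c e * ∑ i, (Aᵀ * P t) e i * (Aᵀ * P s) e i)
          + c e * x s e * ∑ i, Λ t e i ^ 2 := by
      intro e
      rw [sum_sq_sub (fun i => (Aᵀ * P s) e i) (fun i => (Aᵀ * P t) e i), hqN e]
      have := (hc e).ne'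
      field_simp
    rw [Finset.sum_congr rfl fun e _ => hper e, Finset.sum_add_distrib,
      Finset.sum_sub_distrib, ← Finset.mul_sum, ← E1 s, ← E2 s]
  have hDpnn : ∀ s, 0 ≤ ∑ e, x s e / c e * ∑ i, ((Aᵀ * P s) e i - (Aᵀ * P t) e i)^2 := by
    intro s
    exact Finset.sum_nonneg fun e _ => mul_nonneg (div_nonneg (hx s e).le (hc e).le)
      (Finset.sum_nonneg fun i _ => sq_nonneg _)
  -- the smooth comparison function G
  have hG : HasDerivAt (fun s => F t + (1/2) * ∑ e, (c e * (1 - ∑ i, Λ t e i ^ 2)) * x s e) D t := by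
    have h1 : HasDerivAt (fun s => ∑ e, (c e * (1 - ∑ i, Λ t e i ^ 2)) * x s e)
        (∑ e, (c e * (1 - ∑ i, Λ t e i ^ 2)) *
          (x t e * (g e (Real.sqrt (∑ i, Λ t e i ^ 2)) - 1))) t :=
      HasDerivAt.fun_sum fun e _ => (hdyn t e).const_mul _
    have h2 := (h1.const_mul (1/2 : ℝ)).const_add (F t)
    refine h2.congr_deriv ?_
    rw [hD, Finset.mul_sum]
    exact Finset.sum_congr rfl fun e _ => by ring
  -- R = ℒ - G equals Dp / 2
  have hReq : ∀ s, (1/2 : ℝ) * (∑ e, c e * x s e + Matrix.trace (Bᵀ * P s))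
      - (F t + (1/2) * ∑ e, (c e * (1 - ∑ i, Λ t e i ^ 2)) * x s e)
      = (∑ e, x s e / c e * ∑ i, ((Aᵀ * P s) e i - (Aᵀ * P t) e i)^2)/2 := by
    intro s
    rw [htrace s]
    have h1 := hDp s
    have hzero : ∑ e, (c e * x s e - (c e * (1 - ∑ i, Λ t e i ^ 2)) * x s e
        - c e * x s e * ∑ i, Λ t e i ^ 2) = 0 :=
      Finset.sum_eq_zero fun e _ => by ring
    rw [Finset.sum_sub_distrib, Finset.sum_sub_distrib] at hzero
    linarith
  -- per-edge Lipschitz-type eventual bounds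
  set vK : Fin m → ℝ := fun e =>
    |x t e * (g e (Real.sqrt (∑ i, Λ t e i ^ 2)) - 1)| + 1 with hvKdef
  have hvKnn : ∀ e, 0 ≤ vK e := fun e => by positivity
  have hev : ∀ᶠ s in nhds t, ∀ e, x t e / 2 ≤ x s e ∧ |x s e - x t e| ≤ vK e * |s - t| := by
    rw [Filter.eventually_all]
    intro e
    have hd := hdyn t e
    have hcont : ∀ᶠ s in nhds t, x t e / 2 < x s e :=
      hd.continuousAt.eventually (eventually_gt_nhds (by linarith [hx t e]))
    have h2 := (hasDerivAt_iff_isLittleO.mp hd).def one_pos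
    filter_upwards [hcont, h2] with s hs1 hs2
    refine ⟨hs1.le, ?_⟩
    rw [Real.norm_eq_abs, Real.norm_eq_abs, smul_eq_mul, one_mul] at hs2
    set V := x t e * (g e (Real.sqrt (∑ i, Λ t e i ^ 2)) - 1) with hV
    have habs : |x s e - x t e| ≤ |x s e - x t e - (s - t)*V| + |(s - t)*V| := by
      calc |x s e - x t e| = |(x s e - x t e - (s - t)*V) + (s - t)*V| := by ring_nf
        _ ≤ |x s e - x t e - (s - t)*V| + |(s - t)*V| := abs_add_le _ _
    rw [abs_mul] at habs
    have : vK e * |s - t| = |s - t| + |s - t| * |V| := by rw [hvKdef]; ring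
    rw [this]
    linarith
  set C : ℝ := ∑ e, 10 * vK e ^ 2 * F t / (x t e) ^ 2 with hCdef
  have hCnn : 0 ≤ C := by
    rw [hCdef]
    exact Finset.sum_nonneg fun e _ => div_nonneg
      (mul_nonneg (mul_nonneg (by norm_num) (sq_nonneg _)) hFtnn) (sq_nonneg _)
  -- the key quadratic bound
  have hDpbound : ∀ᶠ s in nhds t,
      ∑ e, x s e / c e * ∑ i, ((Aᵀ * P s) e i - (Aᵀ * P t) e i)^2 ≤ 2 * (C * (s - t)^2) := by
    filter_upwards [hev] with s hs
    have hxs : ∀ e, 0 < x s e := fun e => lt_of_lt_of_le (by linarith [hx t e]) (hs e).1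
    -- product bound for b
    have hb : ∀ e, x t e * (∑ i, (Aᵀ * P t) e i * (Aᵀ * P t) e i) ≤ F t * c e := by
      intro e
      have h1 : x t e / c e * ∑ i, (Aᵀ * P t) e i * (Aᵀ * P t) e i ≤ F t := by
        rw [E1 t]
        exact Finset.single_le_sum (f := fun e =>
            x t e / c e * ∑ i, (Aᵀ * P t) e i * (Aᵀ * P t) e i)
          (fun e' _ => mul_nonneg (div_nonneg (hx t e').le (hc e').le)
            (Finset.sum_nonneg fun i _ => mul_self_nonneg _)) (Finset.mem_univ e)
      rw [div_mul_eq_mul_div, div_le_iff₀ (hc e)] at h1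
      linarith
    -- T s ≤ 2 F s
    have hTs : ∑ e, x t e / c e * ∑ i, (Aᵀ * P s) e i * (Aᵀ * P s) e i ≤ 2 * F s := by
      rw [E1 s, Finset.mul_sum]
      refine Finset.sum_le_sum fun e _ => ?_
      have hSnn : 0 ≤ ∑ i, (Aᵀ * P s) e i * (Aᵀ * P s) e i :=
        Finset.sum_nonneg fun i _ => mul_self_nonneg _
      have h2 : x t e ≤ 2 * x s e := by linarith [(hs e).1]
      have h3 : 0 ≤ (c e)⁻¹ * ∑ i, (Aᵀ * P s) e i * (Aᵀ * P s) e i :=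
        mul_nonneg (inv_nonneg.mpr (hc e).le) hSnn
      have h4 := mul_le_mul_of_nonneg_right h2 h3
      simp only [div_eq_mul_inv]
      nlinarith [h4]
    -- Gram inequality ⇒ F s ≤ 2 F t
    have hFs2 : F s ≤ 2 * F t := by
      have hGram : 0 ≤ ∑ e, x t e / c e *
          ∑ i, ((Aᵀ * P t) e i - (Aᵀ * P s) e i / 2)^2 :=
        Finset.sum_nonneg fun e _ => mul_nonneg (div_nonneg (hx t e).le (hc e).le)
          (Finset.sum_nonneg fun i _ => sq_nonneg _)
      have hexp : ∑ e, x t e / c e * ∑ i, ((Aᵀ * P t) e i - (Aᵀ * P s) e i / 2)^2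
          = F t - F s + (∑ e, x t e / c e * ∑ i, (Aᵀ * P s) e i * (Aᵀ * P s) e i)/4 := by
        have hper : ∀ e, x t e / c e * ∑ i, ((Aᵀ * P t) e i - (Aᵀ * P s) e i / 2)^2
            = x t e / c e * ∑ i, (Aᵀ * P t) e i * (Aᵀ * P t) e i
              - x t e / c e * ∑ i, (Aᵀ * P s) e i * (Aᵀ * P t) e i
              + (x t e / c e * ∑ i, (Aᵀ * P s) e i * (Aᵀ * P s) e i)/4 := by
          intro e
          rw [sum_half_sub (fun i => (Aᵀ * P s) e i) (fun i => (Aᵀ * P t) e i)]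
          ring
        rw [Finset.sum_congr rfl fun e _ => hper e, Finset.sum_add_distrib,
          Finset.sum_sub_distrib, ← Finset.sum_div, ← E1 t, ← E3 s]
      linarith
    -- product bound for a
    have ha : ∀ e, x t e * (∑ i, (Aᵀ * P s) e i * (Aᵀ * P s) e i) ≤ 4 * F t * c e := by
      intro e
      have h1 : x s e / c e * ∑ i, (Aᵀ * P s) e i * (Aᵀ * P s) e i ≤ F s := by
        rw [E1 s]
        exact Finset.single_le_sum (f := fun e =>
            x s e / c e * ∑ i, (Aᵀ * P s) e i * (Aᵀ * P s) e i)
          (fun e' _ => mul_nonneg (div_nonneg (hxs e').le (hc e').le)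
            (Finset.sum_nonneg fun i _ => mul_self_nonneg _)) (Finset.mem_univ e)
      rw [div_mul_eq_mul_div, div_le_iff₀ (hc e)] at h1
      have hSnn : 0 ≤ ∑ i, (Aᵀ * P s) e i * (Aᵀ * P s) e i :=
        Finset.sum_nonneg fun i _ => mul_self_nonneg _
      have h2 : x t e ≤ 2 * x s e := by linarith [(hs e).1]
      nlinarith [mul_le_mul_of_nonneg_right h2 hSnn, mul_pos (hc e) (hx t e),
        mul_le_mul_of_nonneg_right hFs2 (hc e).le]
    -- Dp expansion (b-form) and Dt expansion
    have hDpb : ∑ e, x s e / c e * ∑ i, ((Aᵀ * P s) e i - (Aᵀ * P t) e i)^2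
        = F s - 2*F t + ∑ e, x s e / c e * ∑ i, (Aᵀ * P t) e i * (Aᵀ * P t) e i := by
      have hper : ∀ e, x s e / c e * ∑ i, ((Aᵀ * P s) e i - (Aᵀ * P t) e i)^2
          = x s e / c e * ∑ i, (Aᵀ * P s) e i * (Aᵀ * P s) e i
            - 2*(x s e / c e * ∑ i, (Aᵀ * P t) e i * (Aᵀ * P s) e i)
            + x s e / c e * ∑ i, (Aᵀ * P t) e i * (Aᵀ * P t) e i := by
        intro e
        rw [sum_sq_sub (fun i => (Aᵀ * P s) e i) (fun i => (Aᵀ * P t) e i)]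
        ring
      rw [Finset.sum_congr rfl fun e _ => hper e, Finset.sum_add_distrib,
        Finset.sum_sub_distrib, ← Finset.mul_sum, ← E1 s, ← E2 s]
    have hDt : ∑ e, x t e / c e * ∑ i, ((Aᵀ * P s) e i - (Aᵀ * P t) e i)^2
        = (∑ e, x t e / c e * ∑ i, (Aᵀ * P s) e i * (Aᵀ * P s) e i) - 2*F s + F t := by
      have hper : ∀ e, x t e / c e * ∑ i, ((Aᵀ * P s) e i - (Aᵀ * P t) e i)^2
          = x t e / c e * ∑ i, (Aᵀ * P s) e i * (Aᵀ * P s) e i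
            - 2*(x t e / c e * ∑ i, (Aᵀ * P t) e i * (Aᵀ * P s) e i)
            + x t e / c e * ∑ i, (Aᵀ * P t) e i * (Aᵀ * P t) e i := by
        intro e
        rw [sum_sq_sub (fun i => (Aᵀ * P s) e i) (fun i => (Aᵀ * P t) e i)]
        ring
      rw [Finset.sum_congr rfl fun e _ => hper e, Finset.sum_add_distrib,
        Finset.sum_sub_distrib, ← Finset.mul_sum, ← E3' s, ← E1 t]
    have hDtnn : 0 ≤ ∑ e, x t e / c e * ∑ i, ((Aᵀ * P s) e i - (Aᵀ * P t) e i)^2 :=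
      Finset.sum_nonneg fun e _ => mul_nonneg (div_nonneg (hx t e).le (hc e).le)
        (Finset.sum_nonneg fun i _ => sq_nonneg _)
    -- the sum identity : Dp + Dt = ∑ ((x t - x s)/c) (a - b)
    have hident : (∑ e, x s e / c e * ∑ i, ((Aᵀ * P s) e i - (Aᵀ * P t) e i)^2)
        + (∑ e, x t e / c e * ∑ i, ((Aᵀ * P s) e i - (Aᵀ * P t) e i)^2)
        = ∑ e, (x t e - x s e)/c e * ((∑ i, (Aᵀ * P s) e i * (Aᵀ * P s) e i)
            - ∑ i, (Aᵀ * P t) e i * (Aᵀ * P t) e i) := by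
      have hRHS : ∑ e, (x t e - x s e)/c e * ((∑ i, (Aᵀ * P s) e i * (Aᵀ * P s) e i)
            - ∑ i, (Aᵀ * P t) e i * (Aᵀ * P t) e i)
          = (∑ e, x t e / c e * ∑ i, (Aᵀ * P s) e i * (Aᵀ * P s) e i) - F s - F t
            + ∑ e, x s e / c e * ∑ i, (Aᵀ * P t) e i * (Aᵀ * P t) e i := by
        have hper : ∀ e, (x t e - x s e)/c e * ((∑ i, (Aᵀ * P s) e i * (Aᵀ * P s) e i)
              - ∑ i, (Aᵀ * P t) e i * (Aᵀ * P t) e i)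
            = (x t e / c e * ∑ i, (Aᵀ * P s) e i * (Aᵀ * P s) e i
                - x s e / c e * ∑ i, (Aᵀ * P s) e i * (Aᵀ * P s) e i
                - x t e / c e * ∑ i, (Aᵀ * P t) e i * (Aᵀ * P t) e i)
                + x s e / c e * ∑ i, (Aᵀ * P t) e i * (Aᵀ * P t) e i := by
          intro e
          field_simp
          ring
        rw [Finset.sum_congr rfl fun e _ => hper e, Finset.sum_add_distrib,
          Finset.sum_sub_distrib, Finset.sum_sub_distrib, ← E1 s, ← E1 t]
      rw [hRHS]
      linarith [hDpb, hDt]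
    -- Young per edge
    have hyoung : ∀ e ∈ Finset.univ, (x t e - x s e)/c e *
          ((∑ i, (Aᵀ * P s) e i * (Aᵀ * P s) e i) - ∑ i, (Aᵀ * P t) e i * (Aᵀ * P t) e i)
        ≤ x s e/(2*c e) * (∑ i, ((Aᵀ * P s) e i - (Aᵀ * P t) e i)^2)
          + (x t e - x s e)^2/(2*c e*x s e) * (∑ i, ((Aᵀ * P s) e i + (Aᵀ * P t) e i)^2) := by
      intro e _
      rw [sum_mul_self_sub (fun i => (Aᵀ * P s) e i) (fun i => (Aᵀ * P t) e i),
        Finset.mul_sum, Finset.mul_sum, Finset.mul_sum, ← Finset.sum_add_distrib]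
      exact Finset.sum_le_sum fun i _ =>
        young_aux (c e) (x s e) (x t e - x s e) ((Aᵀ * P s) e i) ((Aᵀ * P t) e i)
          (hc e) (hxs e)
    -- bound the error term per edge
    have hEbd : ∀ e ∈ Finset.univ, (x t e - x s e)^2/(2*c e*x s e) *
          (∑ i, ((Aᵀ * P s) e i + (Aᵀ * P t) e i)^2)
        ≤ 10 * vK e ^ 2 * F t / (x t e)^2 * (s - t)^2 := by
      intro e _
      have hp : x t e * (∑ i, ((Aᵀ * P s) e i + (Aᵀ * P t) e i)^2) ≤ 10 * F t * c e := by
        have h1 := sum_add_sq_le (fun i => (Aᵀ * P s) e i) (fun i => (Aᵀ * P t) e i)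
        nlinarith [ha e, hb e, hx t e, mul_le_mul_of_nonneg_left h1 (hx t e).le]
      have hdx : (x t e - x s e)^2 ≤ vK e ^ 2 * (s - t)^2 := by
        have h1 := (hs e).2
        calc (x t e - x s e)^2 = |x s e - x t e|^2 := by rw [sq_abs]; ring
          _ ≤ (vK e * |s - t|)^2 := pow_le_pow_left₀ (abs_nonneg _) h1 2
          _ = vK e ^ 2 * (s - t)^2 := by rw [mul_pow, sq_abs]
      exact bound_aux (c e) (x t e) (x s e) _ _ (vK e) (s - t) (F t) (hc e) (hx t e)
        (hs e).1 (Finset.sum_nonneg fun i _ => sq_nonneg _) hp hdx hFtnn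
    have hhalf : ∑ e, x s e/(2*c e) * (∑ i, ((Aᵀ * P s) e i - (Aᵀ * P t) e i)^2)
        = (∑ e, x s e / c e * ∑ i, ((Aᵀ * P s) e i - (Aᵀ * P t) e i)^2)/2 := by
      rw [Finset.sum_div]
      exact Finset.sum_congr rfl fun e _ => by
        rw [div_mul_eq_mul_div, div_mul_eq_mul_div]
        ring
    have hCsum : ∑ e, 10 * vK e ^ 2 * F t / (x t e)^2 * (s - t)^2 = C * (s - t)^2 := by
      rw [hCdef, Finset.sum_mul]
    have hstep1 := Finset.sum_le_sum hyoung
    have hstep2 := Finset.sum_le_sum hEbd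
    rw [Finset.sum_add_distrib] at hstep1
    rw [hCsum] at hstep2
    rw [hhalf] at hstep1
    linarith [hident, hDtnn, hstep1, hstep2]
  -- assemble: remainder has derivative 0
  have hR0 : HasDerivAt (fun s => (1/2 : ℝ) * (∑ e, c e * x s e + Matrix.trace (Bᵀ * P s))
      - (F t + (1/2) * ∑ e, (c e * (1 - ∑ i, Λ t e i ^ 2)) * x s e)) 0 t := by
    rw [hasDerivAt_iff_isLittleO]
    have hRt : (1/2 : ℝ) * (∑ e, c e * x t e + Matrix.trace (Bᵀ * P t))
        - (F t + (1/2) * ∑ e, (c e * (1 - ∑ i, Λ t e i ^ 2)) * x t e) = 0 := by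
      rw [hReq t]
      simp
    rw [Asymptotics.isLittleO_iff]
    intro ε hε
    have hsmall : ∀ᶠ s in nhds t, |s - t| ≤ ε/(C+1) := by
      have hmem := Metric.ball_mem_nhds t (show (0:ℝ) < ε/(C+1) by positivity)
      exact Filter.eventually_of_mem hmem fun s hs =>
        le_of_lt (by rwa [Metric.mem_ball, Real.dist_eq] at hs)
    filter_upwards [hDpbound, hsmall] with s h1 h2
    rw [hRt, smul_zero, sub_zero, Real.norm_eq_abs, Real.norm_eq_abs, hReq s, sub_zero]
    have hDnn := hDpnn s
    rw [abs_of_nonneg (by linarith : (0:ℝ) ≤ (∑ e, x s e / c e *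
      ∑ i, ((Aᵀ * P s) e i - (Aᵀ * P t) e i)^2)/2)]
    have h3 : (C+1) * |s - t| ≤ ε := by
      have hC1 : (0:ℝ) < C + 1 := by positivity
      have h5 := mul_le_mul_of_nonneg_left h2 hC1.le
      have h6 : (C+1)*(ε/(C+1)) = ε := by field_simp
      linarith
    have h4 : (s - t)^2 = |s - t| * |s - t| := by
      rw [← sq_abs (s - t)]; ring
    nlinarith [abs_nonneg (s - t), h3, h1, h4, hCnn]
  -- combine
  have hfinal := hG.fun_add hR0
  have heq : (fun s => (F t + (1/2) * ∑ e, (c e * (1 - ∑ i, Λ t e i ^ 2)) * x s e)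
      + ((1/2 : ℝ) * (∑ e, c e * x s e + Matrix.trace (Bᵀ * P s))
        - (F t + (1/2) * ∑ e, (c e * (1 - ∑ i, Λ t e i ^ 2)) * x s e)))
      = fun s => (1/2 : ℝ) * (∑ e, c e * x s e + Matrix.trace (Bᵀ * P s)) := by
    funext s
    ring
  rw [heq] at hfinal
  simpa using hfinal
end

section
/- Weak duality MaxP ≤ MinL: for every P ∈ ℝ^{n×k} with ‖(A^T)_e P‖_2 ≤ c_e for all e, and every x ∈ ℝ^m_{≥0} for which L(x)P(x) = B is solvable, Tr(B^T P) ≤ L(x) = (1/2)(c^T x + Tr(B^T P(x))). -/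
open Matrix

private lemma sum_mul_le_sqrt_mul_sqrt {ι : Type*} (s : Finset ι) (f g : ι → ℝ) :
    ∑ i ∈ s, f i * g i ≤ Real.sqrt (∑ i ∈ s, f i ^ 2) * Real.sqrt (∑ i ∈ s, g i ^ 2) := by
  have h := Finset.sum_mul_sq_le_sq_mul_sq s f g
  calc ∑ i ∈ s, f i * g i ≤ |∑ i ∈ s, f i * g i| := le_abs_self _
    _ = Real.sqrt ((∑ i ∈ s, f i * g i) ^ 2) := (Real.sqrt_sq_eq_abs _).symm
    _ ≤ Real.sqrt ((∑ i ∈ s, f i ^ 2) * ∑ i ∈ s, g i ^ 2) := Real.sqrt_le_sqrt h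
    _ = _ := Real.sqrt_mul (Finset.sum_nonneg fun i _ => sq_nonneg _) _

/-- Weak duality MaxP ≤ MinL: any feasible P for the dual has Tr(BᵀP) ≤ ℒ(x)
for every x ≥ 0 with solvable potentials. -/
theorem weak_duality_MaxP_le_MinL
    (n m k : ℕ) (A : Matrix (Fin n) (Fin m) ℝ) (B : Matrix (Fin n) (Fin k) ℝ)
    (c : Fin m → ℝ) (hc : ∀ e, 0 < c e)
    (hB : ∀ i, ∃ f : Fin m → ℝ, A *ᵥ f = fun v => B v i)
    (P : Matrix (Fin n) (Fin k) ℝ)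
    (hPfeas : ∀ e, Real.sqrt (∑ i, ((Aᵀ * P) e i) ^ 2) ≤ c e)
    (x : Fin m → ℝ) (hx : ∀ e, 0 ≤ x e)
    (Px : Matrix (Fin n) (Fin k) ℝ)
    (hPx : A * Matrix.diagonal (fun e => x e / c e) * Aᵀ * Px = B) :
    Matrix.trace (Bᵀ * P) ≤ (1 / 2) * (∑ e, c e * x e + Matrix.trace (Bᵀ * Px)) := by
  set d : Fin m → ℝ := fun e => x e / c e with hd
  set U : Matrix (Fin m) (Fin k) ℝ := Aᵀ * Px with hU
  set V : Matrix (Fin m) (Fin k) ℝ := Aᵀ * P with hV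
  have hBt : Bᵀ = Uᵀ * Matrix.diagonal d * Aᵀ := by
    rw [← hPx]
    simp only [Matrix.transpose_mul, Matrix.transpose_transpose, Matrix.diagonal_transpose, hU,
      Matrix.mul_assoc]
  have key : ∀ M : Matrix (Fin n) (Fin k) ℝ,
      Matrix.trace (Bᵀ * M) = ∑ e, d e * ∑ i, U e i * (Aᵀ * M) e i := by
    intro M
    have hBM : Bᵀ * M = Uᵀ * Matrix.diagonal d * (Aᵀ * M) := by
      rw [hBt, Matrix.mul_assoc]
    rw [hBM, Matrix.trace_mul_comm]
    set W := Aᵀ * M with hW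
    simp only [Matrix.trace, Matrix.diag_apply, Matrix.mul_apply, Matrix.mul_diagonal,
      Matrix.transpose_apply]
    refine Finset.sum_congr rfl fun e _ => ?_
    rw [Finset.mul_sum]
    refine Finset.sum_congr rfl fun i _ => ?_
    simp only [Matrix.diagonal_apply, mul_ite, mul_zero, Finset.sum_ite_eq', Finset.mem_univ,
      if_true, hd]
    ring
  rw [key P, key Px]
  have hPxx : ∀ e i, (Aᵀ * Px) e i = U e i := fun e i => rfl
  -- pointwise bound
  have hrhs : (1 / 2 : ℝ) * (∑ e, c e * x e + ∑ e, d e * ∑ i, U e i * (Aᵀ * Px) e i)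
      = ∑ e, (1 / 2 * (c e * x e) + 1 / 2 * (d e * ∑ i, U e i * U e i)) := by
    simp only [hPxx]
    rw [Finset.sum_add_distrib, ← Finset.mul_sum, ← Finset.mul_sum, mul_add]
  rw [hrhs]
  refine Finset.sum_le_sum fun e _ => ?_
  set s : ℝ := Real.sqrt (∑ i, U e i ^ 2) with hs
  have hsnn : 0 ≤ s := Real.sqrt_nonneg _
  have hssq : s ^ 2 = ∑ i, U e i ^ 2 :=
    Real.sq_sqrt (Finset.sum_nonneg fun i _ => sq_nonneg _)
  have hT : ∑ i, U e i * V e i ≤ c e * s := by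
    calc ∑ i, U e i * V e i ≤ Real.sqrt (∑ i, U e i ^ 2) * Real.sqrt (∑ i, V e i ^ 2) :=
          sum_mul_le_sqrt_mul_sqrt _ _ _
      _ ≤ s * c e := by
          exact mul_le_mul_of_nonneg_left (hPfeas e) hsnn
      _ = c e * s := mul_comm _ _
  have hdnn : 0 ≤ d e := div_nonneg (hx e) (hc e).le
  have hdc : d e * c e = x e := div_mul_cancel₀ _ (hc e).ne'
  have hUV : ∀ i, U e i * (Aᵀ * P) e i = U e i * V e i := fun i => rfl
  have hU2 : ∑ i, U e i * U e i = s ^ 2 := by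
    rw [hssq]; exact Finset.sum_congr rfl fun i _ => (sq (U e i)).symm
  simp only [hUV, hU2]
  have h1 : d e * ∑ i, U e i * V e i ≤ d e * (c e * s) :=
    mul_le_mul_of_nonneg_left hT hdnn
  nlinarith [mul_nonneg hdnn (sq_nonneg (c e - s)), (hc e).le, hsnn]
end

section
/- The three optimization values coincide: MinQ = min{Σ_e c_e ‖Q_e‖_2 : AQ = B}, MaxP = max{Tr(B^T P) : ‖(A^T)_e P‖_2 ≤ c_e for all e}, and MinL = min_{x ≥ 0} L(x) are all equal, where L(x) = (1/2)(c^T x + Tr(B^T P(x))) with L(x)P(x) = B. -/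
open Matrix

section MinQAux

noncomputable def nrm {k : ℕ} (v : Fin k → ℝ) : ℝ := Real.sqrt (∑ i, v i ^ 2)
lemma nrm_nonneg {k : ℕ} (v : Fin k → ℝ) : 0 ≤ nrm v := Real.sqrt_nonneg _
lemma nrm_sq {k : ℕ} (v : Fin k → ℝ) : nrm v ^ 2 = ∑ i, v i ^ 2 :=
  Real.sq_sqrt (Finset.sum_nonneg fun i _ => sq_nonneg _)
lemma nrm_eq_zero {k : ℕ} {v : Fin k → ℝ} (h : nrm v = 0) : v = 0 := by
  have h2 : ∑ i, v i ^ 2 = 0 := by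
    have := nrm_sq v; rw [h] at this; linarith [this.symm]
  funext i
  have := (Finset.sum_eq_zero_iff_of_nonneg (fun i _ => sq_nonneg (v i))).1 h2 i (Finset.mem_univ i)
  exact pow_eq_zero_iff (by norm_num) |>.1 this
lemma nrm_pos {k : ℕ} {v : Fin k → ℝ} (h : v ≠ 0) : 0 < nrm v := by
  rcases lt_or_eq_of_le (nrm_nonneg v) with h1 | h1
  · exact h1
  · exact absurd (nrm_eq_zero h1.symm) h
lemma nrm_smul {k : ℕ} {a : ℝ} (ha : 0 ≤ a) (v : Fin k → ℝ) :
    nrm (fun i => a * v i) = a * nrm v := by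
  unfold nrm
  rw [show ∑ i, (a * v i) ^ 2 = a ^ 2 * ∑ i, v i ^ 2 by rw [Finset.mul_sum]; ring_nf,
    Real.sqrt_mul (sq_nonneg a), Real.sqrt_sq ha]
lemma sqrt_add_le {s δ : ℝ} (hs : 0 < s) (h : 0 ≤ s + δ) :
    Real.sqrt (s + δ) ≤ Real.sqrt s + δ / (2 * Real.sqrt s) := by
  have hss : 0 < Real.sqrt s := Real.sqrt_pos.2 hs
  have hnn : 0 ≤ Real.sqrt s + δ / (2 * Real.sqrt s) := by
    have : -s ≤ δ := by linarith
    have h2 : -(Real.sqrt s) ≤ δ / (2 * Real.sqrt s) := by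
      rw [neg_le, ← neg_div, div_le_iff₀ (by linarith)]
      nlinarith [Real.sq_sqrt hs.le]
    linarith
  have key : s + δ ≤ (Real.sqrt s + δ / (2 * Real.sqrt s)) ^ 2 := by
    have e1 : (Real.sqrt s + δ / (2 * Real.sqrt s)) ^ 2
        = s + δ + (δ / (2 * Real.sqrt s)) ^ 2 := by
      field_simp
      nlinarith [Real.sq_sqrt hs.le]
    nlinarith [sq_nonneg (δ / (2 * Real.sqrt s))]
  calc Real.sqrt (s + δ) ≤ Real.sqrt ((Real.sqrt s + δ / (2 * Real.sqrt s)) ^ 2) :=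
        Real.sqrt_le_sqrt key
    _ = _ := Real.sqrt_sq hnn
lemma triple_comm {n m k : ℕ} (f : Fin m → Fin k → Fin n → ℝ) :
    ∑ e, ∑ i, ∑ v, f e i v = ∑ v, ∑ i, ∑ e, f e i v := by
  calc ∑ e, ∑ i, ∑ v, f e i v
      = ∑ e, ∑ v, ∑ i, f e i v := Finset.sum_congr rfl fun e _ => Finset.sum_comm
    _ = ∑ v, ∑ e, ∑ i, f e i v := Finset.sum_comm
    _ = ∑ v, ∑ i, ∑ e, f e i v := Finset.sum_congr rfl fun v _ => Finset.sum_comm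
lemma rearrange {n m k : ℕ} (A : Matrix (Fin n) (Fin m) ℝ) (W : Matrix (Fin m) (Fin k) ℝ)
    (P : Matrix (Fin n) (Fin k) ℝ) :
    ∑ e, ∑ i, W e i * (Aᵀ * P) e i = ∑ v, ∑ i, (∑ e, A v e * W e i) * P v i := by
  simp only [Matrix.mul_apply, Matrix.transpose_apply, Finset.mul_sum, Finset.sum_mul]
  rw [triple_comm (f := fun e i v => W e i * (A v e * P v i))]
  exact Finset.sum_congr rfl fun v _ => Finset.sum_congr rfl fun i _ =>
    Finset.sum_congr rfl fun e _ => by ring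

abbrev E2 (m k : ℕ) := PiLp 2 (fun _ : Fin m => EuclideanSpace ℝ (Fin k))

lemma enorm_eq {k : ℕ} (v : EuclideanSpace ℝ (Fin k)) : ‖v‖ = nrm (fun i => v i) := by
  rw [EuclideanSpace.norm_eq]; unfold nrm
  congr 1; exact Finset.sum_congr rfl fun i _ => by rw [Real.norm_eq_abs, sq_abs]

lemma einner_eq {k : ℕ} (v w : EuclideanSpace ℝ (Fin k)) :
    (inner ℝ v w : ℝ) = ∑ i, v i * w i := by
  simp [PiLp.inner_apply, RCLike.inner_apply, mul_comm]

lemma e2inner_eq {m k : ℕ} (q r : E2 m k) :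
    (inner ℝ q r : ℝ) = ∑ e, ∑ i, q e i * r e i := by
  rw [PiLp.inner_apply]
  exact Finset.sum_congr rfl fun e _ => einner_eq _ _

lemma e2norm_le {m k : ℕ} (q : E2 m k) : ‖q‖ ≤ ∑ e, ‖q e‖ := by
  rw [PiLp.norm_eq_of_L2]
  calc √(∑ e, ‖q e‖ ^ 2) ≤ √((∑ e, ‖q e‖) ^ 2) :=
        Real.sqrt_le_sqrt (Finset.sum_sq_le_sq_sum_of_nonneg fun i _ => norm_nonneg _)
    _ = _ := Real.sqrt_sq (Finset.sum_nonneg fun i _ => norm_nonneg _)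

lemma quad_contra {g C : ℝ} (hg : g < 0) (hC : 0 ≤ C)
    (h : ∀ t : ℝ, 0 < t → 0 ≤ t * g + t ^ 2 * C) : False := by
  set t : ℝ := -g / (2 * (C + 1)) with ht
  have htpos : 0 < t := div_pos (by linarith) (by linarith)
  have hkey := h t htpos
  have htC : g + t * C < 0 := by
    have h1 : t * C ≤ -g / 2 := by
      rw [ht, div_mul_eq_mul_div, div_le_div_iff₀ (by linarith) (by norm_num)]
      nlinarith [mul_nonneg (neg_nonneg.2 hg.le) hC]
    linarith
  have hconv : t * g + t ^ 2 * C = t * (g + t * C) := by ring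
  rw [hconv] at hkey
  have := mul_neg_of_pos_of_neg htpos htC
  linarith

set_option maxHeartbeats 1000000 in
lemma exists_dual {n m k : ℕ} (A : Matrix (Fin n) (Fin m) ℝ) (B : Matrix (Fin n) (Fin k) ℝ)
    (c : Fin m → ℝ) (hc : ∀ e, 0 < c e) (Q : Matrix (Fin m) (Fin k) ℝ) (hQ : A * Q = B)
    (hmin : ∀ Q' : Matrix (Fin m) (Fin k) ℝ, A * Q' = B →
      ∑ e, c e * nrm (Q e) ≤ ∑ e, c e * nrm (Q' e)) :
    ∃ P : Matrix (Fin n) (Fin k) ℝ, ∀ e,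
      (Q e ≠ 0 → ∀ i, (Aᵀ * P) e i = (c e / nrm (Q e)) * Q e i) ∧
      (Q e = 0 → nrm ((Aᵀ * P) e) ≤ c e) := by
  classical
  by_contra hno
  -- the linear map P ↦ AᵀP as a map into E2
  set Phi : Matrix (Fin n) (Fin k) ℝ →ₗ[ℝ] E2 m k :=
    { toFun := fun P => WithLp.toLp 2 (fun e => WithLp.toLp 2 (fun i => (Aᵀ * P) e i))
      map_add' := by
        intro P1 P2; rw [Matrix.mul_add]; rfl
      map_smul' := by
        intro t P; rw [Matrix.mul_smul]; rfl } with hPhi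
  set x : Fin m → ℝ := fun e => nrm (Q e) with hx
  -- target set K
  set K : Set (E2 m k) := {g | ∀ e,
      (Q e ≠ 0 → g e = fun i => (c e / x e) * Q e i) ∧
      (Q e = 0 → ‖g e‖ ≤ c e)} with hK
  -- disjointness
  have hdisj : Disjoint K (LinearMap.range Phi : Set (E2 m k)) := by
    rw [Set.disjoint_left]
    rintro g hgK ⟨P, rfl⟩
    refine hno ⟨P, fun e => ?_⟩
    obtain ⟨h1, h2⟩ := hgK e
    constructor
    · intro hQe i
      exact congrFun (h1 hQe) i
    · intro hQe
      have h3 := h2 hQe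
      rw [enorm_eq] at h3
      exact h3
  -- K is convex
  have hKconv : Convex ℝ K := by
    intro g1 hg1 g2 hg2 a b ha hb hab
    intro e
    constructor
    · intro hQe
      have e1 := (hg1 e).1 hQe
      have e2 := (hg2 e).1 hQe
      funext i
      have h1 := congrFun e1 i
      have h2 := congrFun e2 i
      have : (a • g1 + b • g2) e i = a * g1 e i + b * g2 e i := rfl
      rw [this, h1, h2]
      have : a * ((c e / x e) * Q e i) + b * ((c e / x e) * Q e i)
          = (a + b) * ((c e / x e) * Q e i) := by ring
      rw [this, hab, one_mul]
    · intro hQe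
      have e1 := (hg1 e).2 hQe
      have e2 := (hg2 e).2 hQe
      have : (a • g1 + b • g2) e = a • g1 e + b • g2 e := rfl
      rw [this]
      calc ‖a • g1 e + b • g2 e‖ ≤ ‖a • g1 e‖ + ‖b • g2 e‖ := norm_add_le _ _
        _ = a * ‖g1 e‖ + b * ‖g2 e‖ := by
            rw [norm_smul, norm_smul, Real.norm_of_nonneg ha, Real.norm_of_nonneg hb]
        _ ≤ a * c e + b * c e := by
            gcongr
        _ = c e := by rw [← add_mul, hab, one_mul]
  -- K is closed
  have hKclosed : IsClosed K := by
    have : K = ⋂ e, ({g : E2 m k | Q e ≠ 0 → g e = fun i => (c e / x e) * Q e i} ∩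
        {g : E2 m k | Q e = 0 → ‖g e‖ ≤ c e}) := by
      ext g; simp only [hK, Set.mem_setOf_eq, Set.mem_iInter, Set.mem_inter_iff]
    rw [this]
    refine isClosed_iInter fun e => IsClosed.inter ?_ ?_
    · by_cases hQe : Q e ≠ 0
      · have hset : {g : E2 m k | Q e ≠ 0 → g e = fun i => (c e / x e) * Q e i}
            = (fun g : E2 m k => g e) ⁻¹' {WithLp.toLp 2 (fun i => (c e / x e) * Q e i)} := by
          ext g; simp [hQe, WithLp.ext_iff]
        rw [hset]
        exact IsClosed.preimage (by fun_prop) isClosed_singleton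
      · push_neg at hQe
        have : {g : E2 m k | Q e ≠ 0 → g e = fun i => (c e / x e) * Q e i} = Set.univ := by
          ext g; simp [hQe]
        rw [this]; exact isClosed_univ
    · by_cases hQe : Q e = 0
      · have hset : {g : E2 m k | Q e = 0 → ‖g e‖ ≤ c e}
            = {g : E2 m k | ‖g e‖ ≤ c e} := by
          ext g; simp [hQe]
        rw [hset]
        exact isClosed_le (by fun_prop) continuous_const
      · have : {g : E2 m k | Q e = 0 → ‖g e‖ ≤ c e} = Set.univ := by
          ext g; simp [hQe]
        rw [this]; exact isClosed_univ
  -- K is bounded, hence compact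
  have hKcomp : IsCompact K := by
    refine IsCompact.of_isClosed_subset (isCompact_closedBall (0 : E2 m k) (∑ e, c e))
      hKclosed ?_
    intro g hg
    rw [Metric.mem_closedBall, dist_zero_right]
    refine le_trans (e2norm_le g) (Finset.sum_le_sum fun e _ => ?_)
    by_cases hQe : Q e = 0
    · exact (hg e).2 hQe
    · have hh : (fun i => g e i) = fun i => (c e / x e) * Q e i := funext (congrFun ((hg e).1 hQe))
      rw [enorm_eq, hh]
      have hxpos : 0 < x e := nrm_pos hQe
      have : nrm (fun i => (c e / x e) * Q e i) = (c e / x e) * x e :=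
        nrm_smul (div_nonneg (hc e).le hxpos.le) (Q e)
      rw [this, div_mul_cancel₀ _ (ne_of_gt hxpos)]
  -- separation
  haveI : ContinuousSMul ℝ (E2 m k) := IsBoundedSMul.continuousSMul
  obtain ⟨f, u, v, hfK, huv, hfR⟩ := geometric_hahn_banach_compact_closed (E := E2 m k) hKconv hKcomp
    (LinearMap.range Phi).convex (Submodule.closed_of_finiteDimensional _) hdisj
  -- f vanishes on the range
  have hf0 : ∀ w ∈ LinearMap.range Phi, f w = 0 := by
    intro w hw
    by_contra hfw
    have hall : ∀ t : ℝ, v < f (t • w) := fun t => hfR _ (Submodule.smul_mem _ t hw)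
    have := hall ((v - 1) / f w)
    rw [ContinuousLinearMap.map_smul, smul_eq_mul, div_mul_cancel₀ _ hfw] at this
    linarith
  have hv0 : v < 0 := by
    have := hfR 0 (Submodule.zero_mem _)
    rwa [map_zero] at this
  have hfKneg : ∀ g ∈ K, f g < 0 := fun g hg => lt_trans (lt_trans (hfK g hg) huv) hv0
  -- represent f by a vector d
  set d : E2 m k := (InnerProductSpace.toDual ℝ (E2 m k)).symm f with hd
  have hdf : ∀ w : E2 m k, (inner ℝ d w : ℝ) = f w := fun w =>
    InnerProductSpace.toDual_symm_apply
  -- the matrix D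
  set D : Matrix (Fin m) (Fin k) ℝ := Matrix.of (fun e i => d e i) with hD
  have hAD : ∀ v0 i0, ∑ e, A v0 e * d e i0 = 0 := by
    intro v0 i0
    have h1 : (inner ℝ d (Phi (Matrix.single v0 i0 (1:ℝ))) : ℝ) = 0 := by
      rw [hdf]; exact hf0 _ ⟨_, rfl⟩
    rw [e2inner_eq] at h1
    have h2 : ∑ e, ∑ i, d e i * (Phi (Matrix.single v0 i0 (1:ℝ))) e i
        = ∑ e, ∑ i, (D : Matrix (Fin m) (Fin k) ℝ) e i * (Aᵀ * Matrix.single v0 i0 (1:ℝ)) e i := rfl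
    rw [h2, rearrange] at h1
    have h3 : ∑ v', ∑ i, (∑ e, A v' e * D e i) * (Matrix.single v0 i0 (1:ℝ)) v' i
        = ∑ e, A v0 e * D e i0 := by
      simp [Matrix.single, Matrix.of_apply, ite_and, Finset.sum_ite_eq', mul_ite]
    rw [h3] at h1
    exact h1
  -- A * (Q + t • D) = B
  have hfeas : ∀ t : ℝ, A * (Q + t • D) = B := by
    intro t
    rw [Matrix.mul_add, hQ, Matrix.mul_smul]
    have : A * D = 0 := by
      ext v0 i0
      simpa [Matrix.mul_apply, hD] using hAD v0 i0
    rw [this, smul_zero, add_zero]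
  -- witness point g* in K
  set nd : Fin m → ℝ := fun e => nrm (fun i => d e i) with hnd
  set ip : Fin m → ℝ := fun e => ∑ i, Q e i * d e i with hip
  set gst : E2 m k := WithLp.toLp 2 (fun e =>
    if Q e = 0 then
      (if nd e = 0 then (0 : EuclideanSpace ℝ (Fin k)) else WithLp.toLp 2 (fun i => (c e / nd e) * d e i))
    else WithLp.toLp 2 (fun i => (c e / x e) * Q e i)) with hgst
  have hmem : gst ∈ K := by
    intro e
    constructor
    · intro hQe
      have : gst e = WithLp.toLp 2 (fun i => (c e / x e) * Q e i) := by
        simp only [hgst, WithLp.ofLp_toLp]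
        rw [if_neg hQe]
      exact congrArg WithLp.ofLp this
    · intro hQe
      have h0 : gst e = (if nd e = 0 then (0 : EuclideanSpace ℝ (Fin k))
          else WithLp.toLp 2 (fun i => (c e / nd e) * d e i)) := by
        simp only [hgst, WithLp.ofLp_toLp]; rw [if_pos hQe]
      by_cases hnd0 : nd e = 0
      · rw [h0, if_pos hnd0, norm_zero]; exact (hc e).le
      · rw [h0, if_neg hnd0, enorm_eq]
        simp only [WithLp.ofLp_toLp]
        have hndpos : 0 < nd e := lt_of_le_of_ne (nrm_nonneg _) (Ne.symm hnd0)
        have : nrm (fun i => (c e / nd e) * d e i) = (c e / nd e) * nd e :=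
          nrm_smul (div_nonneg (hc e).le hndpos.le) _
        rw [this, div_mul_cancel₀ _ (ne_of_gt hndpos)]
  -- value of f at g*
  set val : Fin m → ℝ := fun e => if Q e = 0 then c e * nd e else (c e / x e) * ip e with hval
  have hfgst : f gst = ∑ e, val e := by
    rw [← hdf, e2inner_eq]
    refine Finset.sum_congr rfl fun e _ => ?_
    by_cases hQe : Q e = 0
    · have h0 : gst e = (if nd e = 0 then (0 : EuclideanSpace ℝ (Fin k))
          else WithLp.toLp 2 (fun i => (c e / nd e) * d e i)) := by
        simp only [hgst, WithLp.ofLp_toLp]; rw [if_pos hQe]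
      by_cases hnd0 : nd e = 0
      · have hd0 : (fun i => d e i) = (0 : Fin k → ℝ) := nrm_eq_zero hnd0
        rw [h0, if_pos hnd0]
        have : ∀ i, d e i = 0 := fun i => congrFun hd0 i
        simp only [hval, if_pos hQe, hnd0, mul_zero]
        refine Finset.sum_eq_zero fun i _ => by rw [this i, zero_mul]
      · rw [h0, if_neg hnd0]
        simp only [WithLp.ofLp_toLp]
        have hsum : ∑ i, d e i * ((c e / nd e) * d e i)
            = (c e / nd e) * ∑ i, d e i ^ 2 := by
          rw [Finset.mul_sum]
          exact Finset.sum_congr rfl fun i _ => by ring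
        have hnd2 : ∑ i, d e i ^ 2 = nd e ^ 2 := (nrm_sq _).symm
        have hndpos : 0 < nd e := lt_of_le_of_ne (nrm_nonneg _) (Ne.symm hnd0)
        rw [hsum, hnd2]
        simp only [hval, if_pos hQe]
        field_simp
    · have h0 : gst e = WithLp.toLp 2 (fun i => (c e / x e) * Q e i) := by
        simp only [hgst, WithLp.ofLp_toLp]; rw [if_neg hQe]
      rw [h0]
      simp only [hval, if_neg hQe, hip, WithLp.ofLp_toLp]
      rw [Finset.mul_sum]
      exact Finset.sum_congr rfl fun i _ => by ring
  set gval : ℝ := ∑ e, val e with hgval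
  have hgvalneg : gval < 0 := by rw [← hfgst]; exact hfKneg gst hmem
  -- the quadratic coefficient
  set Cq : Fin m → ℝ := fun e => if Q e = 0 then 0 else c e * nd e ^ 2 / (2 * x e) with hCq
  have hCqnonneg : ∀ e, 0 ≤ Cq e := by
    intro e
    simp only [hCq]
    by_cases hQe : Q e = 0
    · rw [if_pos hQe]
    · rw [if_neg hQe]
      have hxpos : 0 < x e := nrm_pos hQe
      exact div_nonneg (mul_nonneg (hc e).le (sq_nonneg _)) (by linarith)
  set C : ℝ := ∑ e, Cq e with hC
  have hCnonneg : 0 ≤ C := Finset.sum_nonneg fun e _ => hCqnonneg e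
  -- growth bound
  have hgrow : ∀ t : ℝ, 0 < t → 0 ≤ t * gval + t ^ 2 * C := by
    intro t ht
    have hrow : ∀ e, c e * nrm ((Q + t • D) e)
        ≤ c e * x e + (t * val e + t ^ 2 * Cq e) := by
      intro e
      have happ : (Q + t • D) e = fun i => Q e i + t * d e i := by
        funext i; simp [hD, Matrix.add_apply, Matrix.smul_apply, smul_eq_mul]
      by_cases hQe : Q e = 0
      · have hx0 : x e = 0 := by
          simp only [hx, hQe]; simp [nrm]
        have : nrm ((Q + t • D) e) = t * nd e := by
          rw [happ]
          have : (fun i => Q e i + t * d e i) = fun i => t * d e i := by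
            funext i; rw [congrFun hQe i]; simp
          rw [this]
          exact nrm_smul ht.le _
        rw [this, hx0]
        simp only [hval, hCq, if_pos hQe]
        refine le_of_eq ?_
        ring
      · have hxpos : 0 < x e := nrm_pos hQe
        have hs : ∑ i, Q e i ^ 2 = x e ^ 2 := (nrm_sq _).symm
        have hexp : ∑ i, (Q e i + t * d e i) ^ 2
            = x e ^ 2 + (2 * t * ip e + t ^ 2 * nd e ^ 2) := by
          have h1 : ∀ i, (Q e i + t * d e i) ^ 2
              = Q e i ^ 2 + (2 * t * (Q e i * d e i) + t ^ 2 * d e i ^ 2) := fun i => by ring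
          rw [Finset.sum_congr rfl fun i _ => h1 i, Finset.sum_add_distrib,
            Finset.sum_add_distrib, ← Finset.mul_sum, ← Finset.mul_sum, hs]
          rw [hip, show ∑ i, d e i ^ 2 = nd e ^ 2 from (nrm_sq _).symm]
        have hbound : nrm ((Q + t • D) e)
            ≤ x e + (2 * t * ip e + t ^ 2 * nd e ^ 2) / (2 * x e) := by
          rw [happ]
          unfold nrm
          rw [hexp]
          have hsq : Real.sqrt (x e ^ 2) = x e := Real.sqrt_sq hxpos.le
          have h2 : 0 ≤ x e ^ 2 + (2 * t * ip e + t ^ 2 * nd e ^ 2) := by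
            rw [← hexp]
            exact Finset.sum_nonneg fun i _ => sq_nonneg _
          have := sqrt_add_le (s := x e ^ 2) (δ := 2 * t * ip e + t ^ 2 * nd e ^ 2)
            (by positivity) h2
          rwa [hsq] at this
        have hbound2 := mul_le_mul_of_nonneg_left hbound (hc e).le
        refine le_trans hbound2 (le_of_eq ?_)
        simp only [hval, hCq, if_neg hQe]
        have hce := (hc e).ne'
        have hxe := hxpos.ne'
        field_simp
    have hsum := hmin (Q + t • D) (hfeas t)
    have hsum2 : ∑ e, c e * nrm ((Q + t • D) e)
        ≤ ∑ e, (c e * x e + (t * val e + t ^ 2 * Cq e)) :=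
      Finset.sum_le_sum fun e _ => hrow e
    have hsum3 : ∑ e, c e * x e ≤ ∑ e, (c e * x e + (t * val e + t ^ 2 * Cq e)) :=
      le_trans hsum hsum2
    have hsum4 : ∑ e, (c e * x e + (t * val e + t ^ 2 * Cq e))
        = ∑ e, c e * x e + (t * gval + t ^ 2 * C) := by
      rw [Finset.sum_add_distrib, hgval, hC, Finset.sum_add_distrib,
        ← Finset.mul_sum, ← Finset.mul_sum]
    rw [hsum4] at hsum3
    linarith
  exact quad_contra hgvalneg hCnonneg hgrow

lemma nrm_CS {k : ℕ} (u v : Fin k → ℝ) : ∑ i, u i * v i ≤ nrm u * nrm v :=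
  Real.sum_mul_le_sqrt_mul_sqrt _ _ _


lemma trace_form {n m k : ℕ} (A : Matrix (Fin n) (Fin m) ℝ) (Q : Matrix (Fin m) (Fin k) ℝ)
    (P : Matrix (Fin n) (Fin k) ℝ) :
    Matrix.trace ((A * Q)ᵀ * P) = ∑ e, ∑ i, Q e i * (Aᵀ * P) e i := by
  rw [rearrange]
  simp only [Matrix.trace, Matrix.diag, Matrix.mul_apply, Matrix.transpose_apply]
  rw [Finset.sum_comm]

lemma exists_min {n m k : ℕ} (A : Matrix (Fin n) (Fin m) ℝ) (B : Matrix (Fin n) (Fin k) ℝ)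
    (c : Fin m → ℝ) (hc : ∀ e, 0 < c e)
    (hB : ∀ i, ∃ f : Fin m → ℝ, A *ᵥ f = fun v => B v i) :
    ∃ Q : Matrix (Fin m) (Fin k) ℝ, A * Q = B ∧
      ∀ Q' : Matrix (Fin m) (Fin k) ℝ, A * Q' = B →
        ∑ e, c e * nrm (Q e) ≤ ∑ e, c e * nrm (Q' e) := by
  classical
  set F : Matrix (Fin m) (Fin k) ℝ → ℝ := fun Q => ∑ e, c e * nrm (Q e) with hF
  -- initial feasible point
  have hQ0 : ∃ Q0 : Matrix (Fin m) (Fin k) ℝ, A * Q0 = B := by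
    refine ⟨Matrix.of (fun e i => (hB i).choose e), ?_⟩
    ext v i
    have := congrFun (hB i).choose_spec v
    simpa [Matrix.mul_apply, Matrix.mulVec, dotProduct] using this
  obtain ⟨Q0, hQ0⟩ := hQ0
  -- matrices as E2 points
  set Mat : E2 m k → Matrix (Fin m) (Fin k) ℝ := fun q => Matrix.of (fun e i => q e i) with hMat
  set q0 : E2 m k := WithLp.toLp 2 (fun e => WithLp.toLp 2 (fun i => Q0 e i)) with hq0
  have hMq0 : Mat q0 = Q0 := rfl
  -- F lower-bounds entries
  have key : ∀ q : E2 m k, A * Mat q = B → F (Mat q) ≤ F Q0 → ‖q‖ ≤ ∑ e, F Q0 / c e := by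
    intro q _ hFq
    refine le_trans (e2norm_le q) (Finset.sum_le_sum fun e _ => ?_)
    have h1 : c e * nrm (Mat q e) ≤ F Q0 := by
      refine le_trans ?_ hFq
      refine Finset.single_le_sum (f := fun e => c e * nrm (Mat q e))
        (fun e _ => mul_nonneg (hc e).le (nrm_nonneg _)) (Finset.mem_univ e)
    rw [enorm_eq]
    rw [le_div_iff₀ (hc e), mul_comm]
    exact h1
  set R : ℝ := 1 + ∑ e, F Q0 / c e with hR
  set S : Set (E2 m k) := {q | A * Mat q = B} with hS
  have hSclosed : IsClosed S := by
    have : S = ⋂ (v : Fin n), ⋂ (i : Fin k), {q : E2 m k | ∑ e, A v e * q e i = B v i} := by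
      ext q
      simp only [hS, Set.mem_setOf_eq, Set.mem_iInter]
      constructor
      · intro h v i
        have := congrFun (congrFun h v) i
        simpa [Matrix.mul_apply, hMat] using this
      · intro h; ext v i; simpa [Matrix.mul_apply, hMat] using h v i
    rw [this]
    refine isClosed_iInter fun v => isClosed_iInter fun i => ?_
    exact isClosed_eq (by fun_prop) continuous_const
  have hFcont : Continuous fun q : E2 m k => F (Mat q) := by
    have : (fun q : E2 m k => F (Mat q)) = fun q : E2 m k =>
        ∑ e, c e * Real.sqrt (∑ i, q e i ^ 2) := rfl
    rw [this]
    fun_prop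
  have hq0S : q0 ∈ S := by rw [hS, Set.mem_setOf_eq, hMq0]; exact hQ0
  have hq0ball : q0 ∈ Metric.closedBall (0 : E2 m k) R := by
    rw [Metric.mem_closedBall, dist_zero_right]
    have := key q0 (by rw [hMq0]; exact hQ0) (by rw [hMq0])
    rw [hR]; linarith
  have hTcomp : IsCompact (S ∩ Metric.closedBall 0 R) :=
    (isCompact_closedBall (0 : E2 m k) R).inter_left hSclosed
  obtain ⟨qm, hqmT, hqmmin⟩ := hTcomp.exists_isMinOn ⟨q0, hq0S, hq0ball⟩
    (hFcont.continuousOn)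
  refine ⟨Mat qm, hqmT.1, ?_⟩
  intro Q' hQ'
  set q' : E2 m k := WithLp.toLp 2 (fun e => WithLp.toLp 2 (fun i => Q' e i)) with hq'
  have hMq' : Mat q' = Q' := rfl
  have hq'S : q' ∈ S := by rw [hS, Set.mem_setOf_eq, hMq']; exact hQ'
  have hFq0 : F (Mat qm) ≤ F Q0 := by
    have := hqmmin ⟨hq0S, hq0ball⟩
    simpa [hMq0] using this
  by_cases hcase : F Q' ≤ F Q0
  · have hball : q' ∈ Metric.closedBall (0 : E2 m k) R := by
      rw [Metric.mem_closedBall, dist_zero_right]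
      have := key q' (by rw [hMq']; exact hQ') (by rw [hMq']; exact hcase)
      rw [hR]; linarith
    have := hqmmin ⟨hq'S, hball⟩
    simpa [hMq'] using this
  · push_neg at hcase
    exact le_trans hFq0 hcase.le

end MinQAux

/-- MinQ = MaxP = MinL: the three optimization values coincide and there are optimizers
Q*, P*, x* related by x*_e = ‖Q*_e‖₂, L(x*)P* = B, Q* = X*C⁻¹AᵀP*. -/
theorem MinQ_eq_MaxP_eq_MinL
    (n m k : ℕ) (A : Matrix (Fin n) (Fin m) ℝ) (B : Matrix (Fin n) (Fin k) ℝ)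
    (c : Fin m → ℝ) (hc : ∀ e, 0 < c e)
    (hB : ∀ i, ∃ f : Fin m → ℝ, A *ᵥ f = fun v => B v i) :
    ∃ (Q : Matrix (Fin m) (Fin k) ℝ) (P : Matrix (Fin n) (Fin k) ℝ) (x : Fin m → ℝ),
      -- Q is an optimal solution of MinQ
      A * Q = B ∧
      (∀ Q' : Matrix (Fin m) (Fin k) ℝ, A * Q' = B →
        ∑ e, c e * Real.sqrt (∑ i, Q e i ^ 2) ≤ ∑ e, c e * Real.sqrt (∑ i, Q' e i ^ 2)) ∧
      -- P is an optimal solution of MaxP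
      (∀ e, Real.sqrt (∑ i, ((Aᵀ * P) e i) ^ 2) ≤ c e) ∧
      (∀ P' : Matrix (Fin n) (Fin k) ℝ,
        (∀ e, Real.sqrt (∑ i, ((Aᵀ * P') e i) ^ 2) ≤ c e) →
        Matrix.trace (Bᵀ * P') ≤ Matrix.trace (Bᵀ * P)) ∧
      -- x is an optimal solution of MinL, with potential P
      (∀ e, 0 ≤ x e) ∧
      A * Matrix.diagonal (fun e => x e / c e) * Aᵀ * P = B ∧
      (∀ y : Fin m → ℝ, (∀ e, 0 ≤ y e) →
        ∀ Py : Matrix (Fin n) (Fin k) ℝ,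
          A * Matrix.diagonal (fun e => y e / c e) * Aᵀ * Py = B →
          (1 / 2) * (∑ e, c e * x e + Matrix.trace (Bᵀ * P)) ≤
            (1 / 2) * (∑ e, c e * y e + Matrix.trace (Bᵀ * Py))) ∧
      -- relations between the optimizers and equality of the three values
      (∀ e, x e = Real.sqrt (∑ i, Q e i ^ 2)) ∧
      Q = Matrix.diagonal (fun e => x e / c e) * (Aᵀ * P) ∧
      ∑ e, c e * Real.sqrt (∑ i, Q e i ^ 2) = Matrix.trace (Bᵀ * P) ∧
      Matrix.trace (Bᵀ * P) = (1 / 2) * (∑ e, c e * x e + Matrix.trace (Bᵀ * P)) := by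
  classical
  obtain ⟨Q, hQ, hmin⟩ := exists_min A B c hc hB
  obtain ⟨P, hP⟩ := exists_dual A B c hc Q hQ hmin
  set x : Fin m → ℝ := fun e => nrm (Q e) with hx
  have hx0 : ∀ e, Q e = 0 → x e = 0 := by
    intro e hQe
    simp only [hx, hQe]
    simp [nrm]
  have hxpos : ∀ e, Q e ≠ 0 → 0 < x e := fun e hQe => nrm_pos hQe
  have traceBP : ∀ P' : Matrix (Fin n) (Fin k) ℝ,
      Matrix.trace (Bᵀ * P') = ∑ e, ∑ i, Q e i * (Aᵀ * P') e i := by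
    intro P'
    rw [← hQ]
    exact trace_form A Q P'
  -- key equality: trace(BᵀP) = ∑ c e * x e
  have keyEq : Matrix.trace (Bᵀ * P) = ∑ e, c e * x e := by
    rw [traceBP P]
    refine Finset.sum_congr rfl fun e _ => ?_
    by_cases hQe : Q e = 0
    · rw [hx0 e hQe, mul_zero]
      exact Finset.sum_eq_zero fun i _ => by rw [congrFun hQe i, Pi.zero_apply, zero_mul]
    · have h1 := (hP e).1 hQe
      have hxe := hxpos e hQe
      calc ∑ i, Q e i * (Aᵀ * P) e i
          = ∑ i, (c e / x e) * Q e i ^ 2 := by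
            refine Finset.sum_congr rfl fun i _ => ?_
            rw [h1 i]; ring
        _ = (c e / x e) * ∑ i, Q e i ^ 2 := (Finset.mul_sum _ _ _).symm
        _ = (c e / x e) * x e ^ 2 := by rw [← nrm_sq (Q e)]
        _ = c e * x e := by field_simp
  -- dual feasibility of P
  have hPfeas : ∀ e, nrm ((Aᵀ * P) e) ≤ c e := by
    intro e
    by_cases hQe : Q e = 0
    · exact (hP e).2 hQe
    · have h1 := (hP e).1 hQe
      have hxe := hxpos e hQe
      have hrow : ((Aᵀ * P) e) = fun i => (c e / x e) * Q e i := funext h1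
      rw [hrow, nrm_smul (div_nonneg (hc e).le hxe.le)]
      rw [show nrm (Q e) = x e from rfl, div_mul_cancel₀ _ hxe.ne']
  -- Q = diagonal (x/c) * (Aᵀ * P)
  have hQdiag : Q = Matrix.diagonal (fun e => x e / c e) * (Aᵀ * P) := by
    ext e i
    rw [Matrix.diagonal_mul]
    by_cases hQe : Q e = 0
    · rw [hx0 e hQe, congrFun hQe i]
      simp
    · rw [(hP e).1 hQe i]
      have hxe := hxpos e hQe
      rw [show nrm (Q e) = x e from rfl]
      field_simp [hxe.ne', (hc e).ne']
  refine ⟨Q, P, x, hQ, fun Q' h => hmin Q' h, hPfeas, ?_, fun e => nrm_nonneg _, ?_, ?_,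
    fun e => rfl, hQdiag, keyEq.symm, by rw [keyEq]; ring⟩
  -- MaxP optimality
  · intro P' hP'
    rw [traceBP P', keyEq]
    refine Finset.sum_le_sum fun e _ => ?_
    calc ∑ i, Q e i * (Aᵀ * P') e i ≤ nrm (Q e) * nrm ((Aᵀ * P') e) := nrm_CS _ _
      _ ≤ nrm (Q e) * c e := mul_le_mul_of_nonneg_left (hP' e) (nrm_nonneg _)
      _ = c e * x e := mul_comm _ _
  -- L(x) P = B
  · rw [Matrix.mul_assoc, Matrix.mul_assoc, ← hQdiag, hQ]
  -- MinL optimality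
  · intro y hy Py hPy
    set Q' : Matrix (Fin m) (Fin k) ℝ := Matrix.diagonal (fun e => y e / c e) * (Aᵀ * Py)
      with hQ'
    have hAQ' : A * Q' = B := by
      rw [hQ', ← Matrix.mul_assoc, ← Matrix.mul_assoc]
      rw [Matrix.mul_assoc (A * Matrix.diagonal fun e => y e / c e) Aᵀ Py] at hPy
      rw [Matrix.mul_assoc]
      exact hPy
    set t : Fin m → ℝ := fun e => nrm ((Aᵀ * Py) e) with hT
    have ht0 : ∀ e, 0 ≤ t e := fun e => nrm_nonneg _
    have hQ'row : ∀ e, Q' e = fun i => (y e / c e) * (Aᵀ * Py) e i := by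
      intro e; funext i; rw [hQ', Matrix.diagonal_mul]
    have hQ'nrm : ∀ e, nrm (Q' e) = (y e / c e) * t e := by
      intro e
      rw [hQ'row e, nrm_smul (div_nonneg (hy e) (hc e).le)]
    have htrace : Matrix.trace (Bᵀ * Py) = ∑ e, (y e / c e) * t e ^ 2 := by
      rw [← hAQ', trace_form]
      refine Finset.sum_congr rfl fun e _ => ?_
      calc ∑ i, Q' e i * (Aᵀ * Py) e i
          = ∑ i, (y e / c e) * ((Aᵀ * Py) e i) ^ 2 := by
            refine Finset.sum_congr rfl fun i _ => ?_
            rw [congrFun (hQ'row e) i]; ring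
        _ = (y e / c e) * ∑ i, ((Aᵀ * Py) e i) ^ 2 := (Finset.mul_sum _ _ _).symm
        _ = (y e / c e) * t e ^ 2 := by rw [← nrm_sq ((Aᵀ * Py) e)]
    have step1 : ∑ e, c e * x e ≤ ∑ e, c e * ((y e / c e) * t e) := by
      have := hmin Q' hAQ'
      calc ∑ e, c e * x e = ∑ e, c e * nrm (Q e) := rfl
        _ ≤ ∑ e, c e * nrm (Q' e) := this
        _ = ∑ e, c e * ((y e / c e) * t e) :=
            Finset.sum_congr rfl fun e _ => by rw [hQ'nrm e]
    have step2 : ∑ e, c e * ((y e / c e) * t e)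
        ≤ ∑ e, (1 / 2) * (c e * y e + (y e / c e) * t e ^ 2) := by
      refine Finset.sum_le_sum fun e _ => ?_
      have ha : 0 ≤ y e / c e := div_nonneg (hy e) (hc e).le
      have hac : y e / c e * c e = y e := div_mul_cancel₀ _ (hc e).ne'
      nlinarith [mul_nonneg ha (sq_nonneg (t e - c e)), ht0 e, hc e]
    have hfin : ∑ e, (1 / 2) * (c e * y e + (y e / c e) * t e ^ 2)
        = (1 / 2) * (∑ e, c e * y e + Matrix.trace (Bᵀ * Py)) := by
      rw [htrace, ← Finset.mul_sum, Finset.sum_add_distrib]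
    rw [keyEq]
    have : (1 / 2 : ℝ) * (∑ e, c e * x e + ∑ e, c e * x e) = ∑ e, c e * x e := by ring
    rw [this]
    calc ∑ e, c e * x e ≤ ∑ e, c e * ((y e / c e) * t e) := step1
      _ ≤ ∑ e, (1 / 2) * (c e * y e + (y e / c e) * t e ^ 2) := step2
      _ = _ := hfin
end

section
/- Along solutions of the dynamics ẋ_e = x_e^β ‖Λ_e‖_2^2 − x_e with β ∈ (0,2), the function L_β(x) = (1/2)( (1/(2−β)) Σ_e c_e x_e^{2−β} + Σ_i (b^i)^T p^i ) satisfies d/dt L_β(x(t)) = Σ_e (c_e/2)(x_e^{1−β} − ‖Λ_e‖_2^2)(x_e^β ‖Λ_e‖_2^2 − x_e) ≤ 0, and equality holds iff for all e either x_e = 0 or ‖Λ_e‖_2^2 = x_e^{1−β}, i.e., iff x is a fixed point. -/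
open Matrix

lemma trace_quad {n m k : ℕ} (A : Matrix (Fin n) (Fin m) ℝ) (d : Fin m → ℝ)
    (R R' : Matrix (Fin n) (Fin k) ℝ) :
    Matrix.trace (Rᵀ * (A * Matrix.diagonal d * Aᵀ) * R') =
      ∑ e, d e * ∑ i, (Aᵀ * R) e i * (Aᵀ * R') e i := by
  have h : Rᵀ * (A * Matrix.diagonal d * Aᵀ) * R' =
      (Aᵀ * R)ᵀ * (Matrix.diagonal d * (Aᵀ * R')) := by
    simp only [Matrix.transpose_mul, Matrix.transpose_transpose, Matrix.mul_assoc]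
  rw [h, Matrix.trace]
  simp only [Matrix.diag_apply, Matrix.mul_apply, Matrix.transpose_apply,
    Matrix.diagonal_apply, ite_mul, zero_mul, Finset.sum_ite_eq, Finset.mem_univ, if_true]
  rw [Finset.sum_comm]
  refine Finset.sum_congr rfl fun e _ => ?_
  rw [Finset.mul_sum]
  refine Finset.sum_congr rfl fun i _ => ?_
  ring

lemma trace_key {n k : ℕ} (L₁ L₂ : Matrix (Fin n) (Fin n) ℝ)
    (B P₁ P₂ : Matrix (Fin n) (Fin k) ℝ)
    (h₁ : L₁ * P₁ = B) (h₂ : L₂ * P₂ = B) (hs : L₁ᵀ = L₁) :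
    Matrix.trace ((P₁ - P₂)ᵀ * L₁ * (P₁ - P₂)) =
      Matrix.trace (Bᵀ * P₁) - Matrix.trace (Bᵀ * P₂)
        + (Matrix.trace (P₂ᵀ * L₁ * P₂) - Matrix.trace (P₂ᵀ * L₂ * P₂)) := by
  have tr_swap : ∀ (X Y : Matrix (Fin n) (Fin k) ℝ),
      Matrix.trace (Xᵀ * Y) = Matrix.trace (Yᵀ * X) := by
    intro X Y
    rw [← Matrix.trace_transpose (Xᵀ * Y), Matrix.transpose_mul, Matrix.transpose_transpose]
  have e1 : Matrix.trace (P₁ᵀ * L₁ * P₁) = Matrix.trace (Bᵀ * P₁) := by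
    rw [Matrix.mul_assoc, h₁, tr_swap]
  have e2 : Matrix.trace (P₂ᵀ * L₁ * P₁) = Matrix.trace (Bᵀ * P₂) := by
    rw [Matrix.mul_assoc, h₁, tr_swap]
  have e3 : Matrix.trace (P₁ᵀ * L₁ * P₂) = Matrix.trace (Bᵀ * P₂) := by
    have h : P₁ᵀ * L₁ = Bᵀ := by rw [← hs, ← Matrix.transpose_mul, h₁]
    rw [h]
  have e4 : Matrix.trace (P₂ᵀ * L₂ * P₂) = Matrix.trace (Bᵀ * P₂) := by
    rw [Matrix.mul_assoc, h₂, tr_swap]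
  have expand : (P₁ - P₂)ᵀ * L₁ * (P₁ - P₂) =
      P₁ᵀ * L₁ * P₁ - P₁ᵀ * L₁ * P₂ - (P₂ᵀ * L₁ * P₁ - P₂ᵀ * L₁ * P₂) := by
    rw [Matrix.transpose_sub, Matrix.sub_mul, Matrix.sub_mul, Matrix.mul_sub, Matrix.mul_sub]
  rw [expand]
  simp only [Matrix.trace_sub]
  rw [e1, e2, e3, e4]
  ring

lemma key_identity {n m k : ℕ} (A : Matrix (Fin n) (Fin m) ℝ) (B : Matrix (Fin n) (Fin k) ℝ)
    (c : Fin m → ℝ) (hc : ∀ e, 0 < c e)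
    (x : ℝ → Fin m → ℝ) (P : ℝ → Matrix (Fin n) (Fin k) ℝ)
    (hP : ∀ t, A * Matrix.diagonal (fun e => x t e / c e) * Aᵀ * P t = B)
    (Λ : ℝ → Matrix (Fin m) (Fin k) ℝ)
    (hΛ : ∀ t, Λ t = Matrix.diagonal (fun e => (c e)⁻¹) * (Aᵀ * P t))
    (s₁ s₂ : ℝ) :
    Matrix.trace (Bᵀ * P s₁) - Matrix.trace (Bᵀ * P s₂)
      + ∑ e, (x s₁ e - x s₂ e) * c e * (∑ i, (Λ s₂ e i)^2)
      = ∑ e, c e * x s₁ e * ∑ i, (Λ s₁ e i - Λ s₂ e i)^2 := by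
  have hApc : ∀ s e i, (Aᵀ * P s) e i = c e * Λ s e i := by
    intro s e i
    have h := congrArg (fun M => M e i) (hΛ s)
    simp only [Matrix.diagonal_mul] at h
    rw [h, ← mul_assoc, mul_inv_cancel₀ (hc e).ne', one_mul]
  have hkey := trace_key (A * Matrix.diagonal (fun e => x s₁ e / c e) * Aᵀ)
      (A * Matrix.diagonal (fun e => x s₂ e / c e) * Aᵀ) B (P s₁) (P s₂)
      (hP s₁) (hP s₂)
      (by simp only [Matrix.transpose_mul, Matrix.transpose_transpose,
            Matrix.diagonal_transpose, Matrix.mul_assoc])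
  rw [trace_quad, trace_quad, trace_quad] at hkey
  have E0 : ∑ e, (x s₁ e / c e) *
        ∑ i, (Aᵀ * (P s₁ - P s₂)) e i * (Aᵀ * (P s₁ - P s₂)) e i
      = ∑ e, c e * x s₁ e * ∑ i, (Λ s₁ e i - Λ s₂ e i)^2 := by
    refine Finset.sum_congr rfl fun e _ => ?_
    have hsub : ∀ i, (Aᵀ * (P s₁ - P s₂)) e i = c e * (Λ s₁ e i - Λ s₂ e i) := by
      intro i
      rw [Matrix.mul_sub, Matrix.sub_apply, hApc, hApc]
      ring
    have : ∑ i, (Aᵀ * (P s₁ - P s₂)) e i * (Aᵀ * (P s₁ - P s₂)) e i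
        = c e ^ 2 * ∑ i, (Λ s₁ e i - Λ s₂ e i)^2 := by
      rw [Finset.mul_sum]
      refine Finset.sum_congr rfl fun i _ => ?_
      rw [hsub]
      ring
    rw [this]
    field_simp [(hc e).ne']
  have E1 : ∀ y : Fin m → ℝ, ∑ e, (y e / c e) * ∑ i, (Aᵀ * P s₂) e i * (Aᵀ * P s₂) e i
      = ∑ e, y e * c e * ∑ i, (Λ s₂ e i)^2 := by
    intro y
    refine Finset.sum_congr rfl fun e _ => ?_
    have : ∑ i, (Aᵀ * P s₂) e i * (Aᵀ * P s₂) e i = c e ^ 2 * ∑ i, (Λ s₂ e i)^2 := by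
      rw [Finset.mul_sum]
      refine Finset.sum_congr rfl fun i _ => ?_
      rw [hApc]
      ring
    rw [this]
    field_simp [(hc e).ne']
  rw [E0, E1, E1] at hkey
  have hsplit : ∑ e, (x s₁ e - x s₂ e) * c e * (∑ i, (Λ s₂ e i)^2)
      = ∑ e, x s₁ e * c e * (∑ i, (Λ s₂ e i)^2)
        - ∑ e, x s₂ e * c e * (∑ i, (Λ s₂ e i)^2) := by
    rw [← Finset.sum_sub_distrib]
    exact Finset.sum_congr rfl fun e _ => by ring
  rw [hsplit]
  linarith

lemma abs_sq_sum_diff_le {k : ℕ} (p q : Fin k → ℝ) (l : ℝ) (hl : 0 < l) :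
    |(∑ i, q i ^ 2) - ∑ i, p i ^ 2| ≤
      (∑ i, (p i - q i) ^ 2) + l * (∑ i, q i ^ 2) + (∑ i, (p i - q i) ^ 2) / l := by
  have per : ∀ i : Fin k, |q i ^ 2 - p i ^ 2| ≤
      (p i - q i) ^ 2 + l * q i ^ 2 + (p i - q i) ^ 2 / l := by
    intro i
    have hr : l * ((p i - q i) ^ 2 / l) = (p i - q i) ^ 2 :=
      mul_div_cancel₀ _ hl.ne'
    have hr0 : 0 ≤ (p i - q i) ^ 2 / l := div_nonneg (sq_nonneg _) hl.le
    rw [abs_sub_le_iff]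
    constructor
    · nlinarith [sq_nonneg (p i - q i - l * q i), sq_nonneg (p i - q i + l * q i),
        sq_nonneg (p i - q i), sq_nonneg (q i), mul_pos hl hl]
    · nlinarith [sq_nonneg (p i - q i - l * q i), sq_nonneg (p i - q i + l * q i),
        sq_nonneg (p i - q i), sq_nonneg (q i), mul_pos hl hl]
  rw [← Finset.sum_sub_distrib]
  refine le_trans (Finset.abs_sum_le_sum_abs _ _) ?_
  calc ∑ i, |q i ^ 2 - p i ^ 2|
      ≤ ∑ i, ((p i - q i) ^ 2 + l * q i ^ 2 + (p i - q i) ^ 2 / l) :=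
        Finset.sum_le_sum fun i _ => per i
    _ = _ := by
        rw [Finset.sum_add_distrib, Finset.sum_add_distrib, ← Finset.mul_sum,
          ← Finset.sum_div]

set_option maxHeartbeats 1600000 in
/-- ℒ_β is a Lyapunov function for the dynamics ẋ_e = x_e^β ‖Λ_e‖₂² − x_e with β ∈ (0,2):
d/dt ℒ_β(x(t)) = Σ_e (c_e/2)(x_e^{1−β} − ‖Λ_e‖₂²)(x_e^β ‖Λ_e‖₂² − x_e) ≤ 0, with
equality iff x(t) is a fixed point. -/
theorem Lyapunov_beta_dynamics
    (n m k : ℕ) (A : Matrix (Fin n) (Fin m) ℝ) (B : Matrix (Fin n) (Fin k) ℝ)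
    (c : Fin m → ℝ) (hc : ∀ e, 0 < c e)
    (β : ℝ) (hβ : β ∈ Set.Ioo (0 : ℝ) 2)
    (x : ℝ → Fin m → ℝ) (P : ℝ → Matrix (Fin n) (Fin k) ℝ)
    (hx : ∀ t e, 0 < x t e)
    (hP : ∀ t, A * Matrix.diagonal (fun e => x t e / c e) * Aᵀ * P t = B)
    (Λ : ℝ → Matrix (Fin m) (Fin k) ℝ)
    (hΛ : ∀ t, Λ t = Matrix.diagonal (fun e => (c e)⁻¹) * (Aᵀ * P t))
    (hdyn : ∀ t e, HasDerivAt (fun s => x s e)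
      (x t e ^ β * (∑ i, Λ t e i ^ 2) - x t e) t)
    (t : ℝ) (D : ℝ)
    (hD : D = ∑ e, (c e / 2) * (x t e ^ (1 - β) - ∑ i, Λ t e i ^ 2) *
      (x t e ^ β * (∑ i, Λ t e i ^ 2) - x t e)) :
    HasDerivAt
      (fun s => (1 / 2) * ((1 / (2 - β)) * ∑ e, c e * x s e ^ (2 - β) +
        Matrix.trace (Bᵀ * P s))) D t ∧
    D ≤ 0 ∧
    (D = 0 ↔ ∀ e, x t e = 0 ∨ (∑ i, Λ t e i ^ 2) = x t e ^ (1 - β)) := by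
  obtain ⟨hβ0, hβ2⟩ := hβ
  have h2β : (2:ℝ) - β ≠ 0 := by linarith
  -- shorthand for the velocity
  set v : Fin m → ℝ := fun e => x t e ^ β * (∑ i, Λ t e i ^ 2) - x t e with hvdef
  clear_value v
  have hdyn' : ∀ e, HasDerivAt (fun s => x s e) (v e) t := fun e => by
    simpa only [hvdef] using hdyn t e
  set K : ℝ := 1 + ∑ e, (1 + |v e|) with hKdef
  have hsum0 : (0:ℝ) ≤ ∑ e, (1 + |v e|) :=
    Finset.sum_nonneg fun e _ => by positivity
  have hK1 : (1:ℝ) ≤ K := by rw [hKdef]; linarith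
  have hK0 : (0:ℝ) < K := lt_of_lt_of_le one_pos hK1
  clear_value K
  have hKe : ∀ e, 1 + |v e| ≤ K := by
    intro e
    have h : 1 + |v e| ≤ ∑ e', (1 + |v e'|) :=
      Finset.single_le_sum (f := fun e' => 1 + |v e'|)
        (fun i _ => by positivity) (Finset.mem_univ e)
    rw [hKdef]; linarith
  set A' : ℝ := ∑ e, c e * (∑ i, Λ t e i ^ 2) / x t e with hA'def
  clear_value A'
  have hA'0 : 0 ≤ A' := by
    rw [hA'def]
    refine Finset.sum_nonneg fun e _ => ?_
    exact div_nonneg (mul_nonneg (hc e).le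
      (Finset.sum_nonneg fun i _ => sq_nonneg _)) (hx t e).le
  set C : ℝ := 13 * K ^ 2 * A' with hCdef
  clear_value C
  -- eventual bounds
  have hev1 : ∀ᶠ s in nhds t, ∀ e, |x s e - x t e| ≤ K * |s - t| := by
    rw [Filter.eventually_all]
    intro e
    have h1 := hasDerivAt_iff_isLittleO.mp (hdyn' e)
    have h2 := (Asymptotics.isLittleO_iff.mp h1) one_pos
    filter_upwards [h2] with s hs
    rw [Real.norm_eq_abs, Real.norm_eq_abs, smul_eq_mul, one_mul] at hs
    have h3 : |x s e - x t e| ≤ |x s e - x t e - (s - t) * v e| + |(s - t) * v e| := by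
      calc |x s e - x t e| = |(x s e - x t e - (s - t) * v e) + (s - t) * v e| := by
            ring_nf
        _ ≤ _ := abs_add_le _ _
    rw [abs_mul] at h3
    calc |x s e - x t e| ≤ |s - t| + |s - t| * |v e| := by linarith
      _ = (1 + |v e|) * |s - t| := by ring
      _ ≤ K * |s - t| := mul_le_mul_of_nonneg_right (hKe e) (abs_nonneg _)
  have hev2 : ∀ᶠ s in nhds t, ∀ e, K * |s - t| ≤ x t e / 8 := by
    rw [Filter.eventually_all]
    intro e
    have hr : 0 < x t e / (8 * K) := by
      have := hx t e; positivity
    filter_upwards [Metric.ball_mem_nhds t hr] with s hs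
    rw [Metric.mem_ball, Real.dist_eq] at hs
    calc K * |s - t| ≤ K * (x t e / (8 * K)) :=
          mul_le_mul_of_nonneg_left hs.le hK0.le
      _ = x t e / 8 := by field_simp
  -- the central quantitative bound
  have hψbound : ∀ᶠ s in nhds t,
      |(Matrix.trace (Bᵀ * P s) + ∑ e, c e * (∑ i, Λ t e i ^ 2) * x s e)
        - (Matrix.trace (Bᵀ * P t) + ∑ e, c e * (∑ i, Λ t e i ^ 2) * x t e)|
        ≤ C * (s - t) ^ 2 := by
    filter_upwards [hev1, hev2] with s hs1 hs2
    by_cases hst : s = t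
    · rw [hst]
      simp
    · have hh0 : 0 < |s - t| := abs_pos.mpr (sub_ne_zero.mpr hst)
      set h := |s - t| with hhdef
      clear_value h
      -- the two key identities
      have key1 := key_identity A B c hc x P hP Λ hΛ s t
      have key2 := key_identity A B c hc x P hP Λ hΛ t s
      -- convert key2's sums
      have key2' : Matrix.trace (Bᵀ * P t) - Matrix.trace (Bᵀ * P s)
          - ∑ e, (x s e - x t e) * c e * (∑ i, (Λ s e i) ^ 2)
          = ∑ e, c e * x t e * ∑ i, (Λ s e i - Λ t e i) ^ 2 := by
        have c1 : ∑ e, (x t e - x s e) * c e * (∑ i, (Λ s e i) ^ 2)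
            = - ∑ e, (x s e - x t e) * c e * (∑ i, (Λ s e i) ^ 2) := by
          rw [← Finset.sum_neg_distrib]
          exact Finset.sum_congr rfl fun e _ => by ring
        have c2 : ∑ e, c e * x t e * ∑ i, (Λ t e i - Λ s e i) ^ 2
            = ∑ e, c e * x t e * ∑ i, (Λ s e i - Λ t e i) ^ 2 := by
          refine Finset.sum_congr rfl fun e _ => ?_
          congr 1
          exact Finset.sum_congr rfl fun i _ => by ring
        rw [c1, c2] at key2
        linarith
      -- names for the sums
      set Ssu : ℝ := ∑ e, c e * x s e * ∑ i, (Λ s e i - Λ t e i) ^ 2 with hSsu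
      set Stu : ℝ := ∑ e, c e * x t e * ∑ i, (Λ s e i - Λ t e i) ^ 2 with hStu
      set Sda : ℝ := ∑ e, (x s e - x t e) * c e * (∑ i, (Λ t e i) ^ 2) with hSda
      set Sdb : ℝ := ∑ e, (x s e - x t e) * c e * (∑ i, (Λ s e i) ^ 2) with hSdb
      clear_value Ssu Stu Sda Sdb
      have hW : Sda - Sdb = Ssu + Stu := by linarith
      have hSsu0 : 0 ≤ Ssu := by
        rw [hSsu]
        refine Finset.sum_nonneg fun e _ => ?_
        have h1 := (hc e).le
        have h2 := (hx s e).le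
        have h3 : (0:ℝ) ≤ ∑ i, (Λ s e i - Λ t e i) ^ 2 :=
          Finset.sum_nonneg fun i _ => sq_nonneg _
        positivity
      have hStu0 : 0 ≤ Stu := by
        rw [hStu]
        refine Finset.sum_nonneg fun e _ => ?_
        have h1 := (hc e).le
        have h2 := (hx t e).le
        have h3 : (0:ℝ) ≤ ∑ i, (Λ s e i - Λ t e i) ^ 2 :=
          Finset.sum_nonneg fun i _ => sq_nonneg _
        positivity
      -- split the difference sum
      have hsplit : Sda - Sdb
          = ∑ e, (x s e - x t e) * c e *
              ((∑ i, (Λ t e i) ^ 2) - ∑ i, (Λ s e i) ^ 2) := by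
        rw [hSda, hSdb, ← Finset.sum_sub_distrib]
        exact Finset.sum_congr rfl fun e _ => by ring
      -- generic per-edge bound
      have per_bound : ∀ (l μ : ℝ), 0 < μ → ∀ e, l = μ * K * h / x t e →
          (x s e - x t e) * c e *
              ((∑ i, (Λ t e i) ^ 2) - ∑ i, (Λ s e i) ^ 2)
            ≤ (1/8 + 1/μ) * (c e * x t e * ∑ i, (Λ s e i - Λ t e i) ^ 2)
              + μ * K ^ 2 * h ^ 2 * (c e * (∑ i, Λ t e i ^ 2) / x t e) := by
        intro l μ hμ e hl
        have hX : 0 < x t e := hx t e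
        have hδ : |x s e - x t e| ≤ K * h := hs1 e
        have hKh : K * h ≤ x t e / 8 := hs2 e
        have hKh0 : 0 < K * h := mul_pos hK0 hh0
        have hlpos : 0 < l := by
          rw [hl]; exact div_pos (mul_pos (mul_pos hμ hK0) hh0) hX
        have hA := abs_sq_sum_diff_le (fun i => Λ s e i) (fun i => Λ t e i) l hlpos
        set u : ℝ := ∑ i, (Λ s e i - Λ t e i) ^ 2 with hu
        set a : ℝ := ∑ i, (Λ t e i) ^ 2 with ha
        set b : ℝ := ∑ i, (Λ s e i) ^ 2 with hb
        clear_value u a b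
        have hu0 : 0 ≤ u := by
          rw [hu]; exact Finset.sum_nonneg fun i _ => sq_nonneg _
        have ha0 : 0 ≤ a := by
          rw [ha]; exact Finset.sum_nonneg fun i _ => sq_nonneg _
        -- hA : |a - b| ≤ u + l * a + u / l
        have h1 : (x s e - x t e) * (a - b) ≤ |x s e - x t e| * |a - b| := by
          calc (x s e - x t e) * (a - b) ≤ |(x s e - x t e) * (a - b)| := le_abs_self _
            _ = |x s e - x t e| * |a - b| := abs_mul _ _
        have h2 : |x s e - x t e| * |a - b| ≤ (K * h) * (u + l * a + u / l) := by
          refine mul_le_mul hδ hA (abs_nonneg _) hKh0.le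
        have h3 : (K * h) * (u + (μ * K * h / x t e) * a + u / (μ * K * h / x t e))
            = K * h * u + μ * K ^ 2 * h ^ 2 * a / x t e + u * x t e / μ := by
          field_simp
        rw [hl] at h2
        rw [h3] at h2
        have h4 : K * h * u ≤ (x t e / 8) * u :=
          mul_le_mul_of_nonneg_right hKh hu0
        have h5 : (x s e - x t e) * (a - b)
            ≤ (1/8 + 1/μ) * (x t e * u) + μ * K ^ 2 * h ^ 2 * (a / x t e) := by
          have hgoal : (1/8 + 1/μ) * (x t e * u) + μ * K ^ 2 * h ^ 2 * (a / x t e)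
              = x t e / 8 * u + u * x t e / μ + μ * K ^ 2 * h ^ 2 * a / x t e := by
            field_simp [hX.ne', hμ.ne']
          rw [hgoal]
          linarith [h1, h2, h4]
        calc (x s e - x t e) * c e * (a - b)
            = c e * ((x s e - x t e) * (a - b)) := by ring
          _ ≤ c e * ((1/8 + 1/μ) * (x t e * u) + μ * K ^ 2 * h ^ 2 * (a / x t e)) := by
              refine mul_le_mul_of_nonneg_left h5 (hc e).le
          _ = (1/8 + 1/μ) * (c e * x t e * u)
              + μ * K ^ 2 * h ^ 2 * (c e * a / x t e) := by ring
      -- sum the bounds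
      have sum_bound : ∀ μ : ℝ, 0 < μ →
          Sda - Sdb ≤ (1/8 + 1/μ) * Stu + μ * K ^ 2 * h ^ 2 * A' := by
        intro μ hμ
        rw [hsplit]
        calc ∑ e, (x s e - x t e) * c e *
              ((∑ i, (Λ t e i) ^ 2) - ∑ i, (Λ s e i) ^ 2)
            ≤ ∑ e, ((1/8 + 1/μ) * (c e * x t e * ∑ i, (Λ s e i - Λ t e i) ^ 2)
                + μ * K ^ 2 * h ^ 2 * (c e * (∑ i, Λ t e i ^ 2) / x t e)) :=
              Finset.sum_le_sum fun e _ => per_bound _ μ hμ e rfl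
          _ = (1/8 + 1/μ) * Stu + μ * K ^ 2 * h ^ 2 * A' := by
              rw [Finset.sum_add_distrib, ← Finset.mul_sum, ← Finset.mul_sum,
                hStu, hA'def]
      -- first: with μ = 8 get bound on Stu
      have hStub : Stu ≤ (32/3) * K ^ 2 * h ^ 2 * A' := by
        have hb := sum_bound 8 (by norm_num)
        have : Stu ≤ Ssu + Stu := by linarith
        have h6 : Stu ≤ (1/8 + 1/8) * Stu + 8 * K ^ 2 * h ^ 2 * A' := by linarith [hW]
        linarith
      -- second: with μ = 1 bound Ssu
      have hSsub : Ssu ≤ 13 * K ^ 2 * h ^ 2 * A' := by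
        have hb := sum_bound 1 (by norm_num)
        have h7 : Ssu + Stu ≤ (1/8 + 1) * Stu + K ^ 2 * h ^ 2 * A' := by linarith [hW]
        have hM : 0 ≤ K ^ 2 * h ^ 2 * A' :=
          mul_nonneg (mul_nonneg (sq_nonneg K) (sq_nonneg h)) hA'0
        linarith only [h7, hStub, hM, hStu0]
      -- ψ difference equals Ssu
      have hψeq : (Matrix.trace (Bᵀ * P s) + ∑ e, c e * (∑ i, Λ t e i ^ 2) * x s e)
          - (Matrix.trace (Bᵀ * P t) + ∑ e, c e * (∑ i, Λ t e i ^ 2) * x t e)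
          = Ssu := by
        have c3 : (∑ e, c e * (∑ i, Λ t e i ^ 2) * x s e)
            - ∑ e, c e * (∑ i, Λ t e i ^ 2) * x t e = Sda := by
          rw [hSda, ← Finset.sum_sub_distrib]
          exact Finset.sum_congr rfl fun e _ => by ring
        have : Matrix.trace (Bᵀ * P s) - Matrix.trace (Bᵀ * P t) = Ssu - Sda := by
          linarith [key1]
        linarith [c3]
      rw [hψeq]
      rw [abs_of_nonneg hSsu0]
      have hsq : h ^ 2 = (s - t) ^ 2 := by rw [hhdef, sq_abs]
      rw [hCdef, ← hsq]
      linarith [hSsub]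
  -- derivative of ψ is 0
  have hψ : HasDerivAt (fun s => Matrix.trace (Bᵀ * P s)
      + ∑ e, c e * (∑ i, Λ t e i ^ 2) * x s e) 0 t := by
    rw [hasDerivAt_iff_isLittleO]
    simp only [smul_zero, sub_zero]
    have hO : (fun s => (Matrix.trace (Bᵀ * P s) + ∑ e, c e * (∑ i, Λ t e i ^ 2) * x s e)
        - (Matrix.trace (Bᵀ * P t) + ∑ e, c e * (∑ i, Λ t e i ^ 2) * x t e))
        =O[nhds t] fun s => (s - t) ^ 2 := by
      rw [Asymptotics.isBigO_iff]
      refine ⟨C, ?_⟩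
      filter_upwards [hψbound] with s hs
      rw [Real.norm_eq_abs, Real.norm_eq_abs, abs_of_nonneg (sq_nonneg (s - t))]
      exact hs
    refine hO.trans_isLittleO ?_
    rw [Asymptotics.isLittleO_iff]
    intro ε hε
    filter_upwards [Metric.ball_mem_nhds t hε] with s hs
    rw [Metric.mem_ball, Real.dist_eq] at hs
    rw [Real.norm_eq_abs, Real.norm_eq_abs, abs_of_nonneg (sq_nonneg (s - t))]
    nlinarith [abs_nonneg (s - t), sq_abs (s - t), le_abs_self (s - t), neg_abs_le (s - t)]
  -- derivative of the trace term
  have hsum : HasDerivAt (fun s => ∑ e, c e * (∑ i, Λ t e i ^ 2) * x s e)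
      (∑ e, c e * (∑ i, Λ t e i ^ 2) * v e) t :=
    HasDerivAt.fun_sum fun e _ => (hdyn' e).const_mul _
  have hg : HasDerivAt (fun s => Matrix.trace (Bᵀ * P s))
      (0 - ∑ e, c e * (∑ i, Λ t e i ^ 2) * v e) t := by
    have := hψ.fun_sub hsum
    simpa only [add_sub_cancel_right] using this
  -- derivative of the power sum
  have hpow : HasDerivAt (fun s => ∑ e, c e * x s e ^ (2 - β))
      (∑ e, c e * (v e * (2 - β) * x t e ^ (2 - β - 1))) t :=
    HasDerivAt.fun_sum fun e _ =>
      (((hdyn' e).rpow_const (Or.inl (hx t e).ne')).const_mul (c e))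
  have htarget : HasDerivAt
      (fun s => (1 / 2) * ((1 / (2 - β)) * ∑ e, c e * x s e ^ (2 - β) +
        Matrix.trace (Bᵀ * P s)))
      ((1/2) * ((1/(2-β)) * (∑ e, c e * (v e * (2 - β) * x t e ^ (2 - β - 1)))
        + (0 - ∑ e, c e * (∑ i, Λ t e i ^ 2) * v e))) t :=
    ((hpow.const_mul _).add hg).const_mul _
  -- identify the derivative with D
  have hDeq : D = (1/2) * ((1/(2-β)) * (∑ e, c e * (v e * (2 - β) * x t e ^ (2 - β - 1)))
      + (0 - ∑ e, c e * (∑ i, Λ t e i ^ 2) * v e)) := by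
    rw [hD]
    conv_rhs => rw [zero_sub, Finset.mul_sum, ← Finset.sum_neg_distrib,
      ← Finset.sum_add_distrib, Finset.mul_sum]
    refine Finset.sum_congr rfl fun e _ => ?_
    rw [show (2:ℝ) - β - 1 = 1 - β by ring, hvdef]
    field_simp
    ring
  refine ⟨hDeq ▸ htarget, ?_, ?_⟩
  · -- D ≤ 0
    rw [hD]
    refine Finset.sum_nonpos fun e _ => ?_
    have hxe := hx t e
    have hsplit : x t e ^ β * x t e ^ (1 - β) = x t e := by
      rw [← Real.rpow_add hxe, show β + (1 - β) = 1 by ring, Real.rpow_one]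
    have hterm : (c e / 2) * (x t e ^ (1 - β) - ∑ i, Λ t e i ^ 2) *
        (x t e ^ β * (∑ i, Λ t e i ^ 2) - x t e)
        = -((c e / 2) * x t e ^ β * (x t e ^ (1 - β) - ∑ i, Λ t e i ^ 2) ^ 2) := by
      linear_combination ((c e) / 2) * (x t e ^ (1 - β) - ∑ i, Λ t e i ^ 2) * hsplit
    rw [hterm]
    have h2 : (0:ℝ) ≤ x t e ^ β := (Real.rpow_pos_of_pos hxe β).le
    have h3 : (0:ℝ) ≤ (x t e ^ (1 - β) - ∑ i, Λ t e i ^ 2) ^ 2 := sq_nonneg _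
    have h1 : (0:ℝ) ≤ c e / 2 := by linarith [hc e]
    exact neg_nonpos.mpr (mul_nonneg (mul_nonneg h1 h2) h3)
  · -- equality iff fixed point
    have hDneg : D = -∑ e, (c e / 2) * x t e ^ β *
        (x t e ^ (1 - β) - ∑ i, Λ t e i ^ 2) ^ 2 := by
      rw [hD, ← Finset.sum_neg_distrib]
      refine Finset.sum_congr rfl fun e _ => ?_
      have hxe := hx t e
      have hsplit : x t e ^ β * x t e ^ (1 - β) = x t e := by
        rw [← Real.rpow_add hxe, show β + (1 - β) = 1 by ring, Real.rpow_one]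
      linear_combination ((c e) / 2) * (x t e ^ (1 - β) - ∑ i, Λ t e i ^ 2) * hsplit
    have hnn : ∀ e ∈ Finset.univ, (0:ℝ) ≤ (c e / 2) * x t e ^ β *
        (x t e ^ (1 - β) - ∑ i, Λ t e i ^ 2) ^ 2 := by
      intro e _
      have h1 := (hc e).le
      have h2 : (0:ℝ) ≤ x t e ^ β := (Real.rpow_pos_of_pos (hx t e) β).le
      positivity
    constructor
    · intro hD0 e
      right
      rw [hDneg, neg_eq_zero] at hD0
      have := (Finset.sum_eq_zero_iff_of_nonneg hnn).mp hD0 e (Finset.mem_univ e)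
      have hce : (0:ℝ) < c e / 2 := by linarith [hc e]
      have hxb : (0:ℝ) < x t e ^ β := Real.rpow_pos_of_pos (hx t e) β
      have hprod : (0:ℝ) < c e / 2 * x t e ^ β := mul_pos hce hxb
      have hsq : (x t e ^ (1 - β) - ∑ i, Λ t e i ^ 2) ^ 2 = 0 := by
        rcases mul_eq_zero.mp this with h' | h'
        · exact absurd h' hprod.ne'
        · exact h'
      have := pow_eq_zero_iff (n := 2) (by norm_num) |>.mp hsq
      linarith [sub_eq_zero.mp this]
    · intro hall
      rw [hDneg, neg_eq_zero]
      refine Finset.sum_eq_zero fun e _ => ?_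
      rcases hall e with he | he
      · exact absurd he (hx t e).ne'
      · rw [← he, sub_self]
        ring
end

section
/- For fixed points x of the dynamics ẋ_e = x_e^β ‖Λ_e‖_2^2 − x_e (i.e., for all e, x_e = 0 or ‖Λ_e‖_2^2 = x_e^{1−β}), one has Σ_e c_e x_e^{2−β} = Σ_i (b^i)^T p^i. -/
open Matrix

/-- For fixed points of the β-dynamics (x_e = 0 or ‖Λ_e‖₂² = x_e^{1−β} for all e),
Σ_e c_e x_e^{2−β} = Σ_i (bⁱ)ᵀpⁱ = Tr(BᵀP). -/
theorem fixed_point_beta_dynamics_cost_eq_energy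
    (n m k : ℕ) (A : Matrix (Fin n) (Fin m) ℝ) (B : Matrix (Fin n) (Fin k) ℝ)
    (c : Fin m → ℝ) (hc : ∀ e, 0 < c e)
    (β : ℝ) (hβ : β ∈ Set.Ioo (0 : ℝ) 2)
    (x : Fin m → ℝ) (hx : ∀ e, 0 ≤ x e)
    (P : Matrix (Fin n) (Fin k) ℝ)
    (hP : A * Matrix.diagonal (fun e => x e / c e) * Aᵀ * P = B)
    (Λ : Matrix (Fin m) (Fin k) ℝ)
    (hΛ : Λ = Matrix.diagonal (fun e => (c e)⁻¹) * (Aᵀ * P))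
    (hfix : ∀ e, x e = 0 ∨ (∑ i, Λ e i ^ 2) = x e ^ (1 - β)) :
    ∑ e, c e * x e ^ (2 - β) = Matrix.trace (Bᵀ * P) := by
  obtain ⟨hβ0, hβ2⟩ := hβ
  have hM : ∀ e i, (Aᵀ * P) e i = c e * Λ e i := by
    intro e i
    rw [hΛ]
    simp [Matrix.mul_apply, Matrix.diagonal_apply, Finset.mul_sum]
    exact Finset.sum_congr rfl fun j _ => (mul_inv_cancel_left₀ (hc e).ne' _).symm
  have key : Matrix.trace (Bᵀ * P)
      = ∑ e, (x e / c e) * ∑ i, (Aᵀ * P) e i ^ 2 := by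
    rw [← hP]
    have h1 : (A * Matrix.diagonal (fun e => x e / c e) * Aᵀ * P)ᵀ * P
        = (Aᵀ * P)ᵀ * (Matrix.diagonal (fun e => x e / c e) * (Aᵀ * P)) := by
      simp [Matrix.transpose_mul, Matrix.diagonal_transpose, Matrix.mul_assoc]
    rw [h1, Matrix.trace_mul_comm]
    simp [Matrix.trace, Matrix.diag, Matrix.mul_apply, Matrix.diagonal_apply,
      Finset.mul_sum, sq, Matrix.transpose_apply]
    refine Finset.sum_congr rfl fun e _ => Finset.sum_congr rfl fun i _ =>
      Finset.sum_congr rfl fun j _ => ?_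
    rw [← Finset.mul_sum]
    ring
  rw [key]
  refine Finset.sum_congr rfl fun e _ => ?_
  rcases hfix e with h0 | hfe
  · simp [h0, hM, Real.zero_rpow (by linarith : (2:ℝ) - β ≠ 0)]
  rcases eq_or_lt_of_le (hx e) with h0 | hpos
  · simp [← h0, hM, Real.zero_rpow (by linarith : (2:ℝ) - β ≠ 0)]
  have : ∑ i, (Aᵀ * P) e i ^ 2 = c e ^ 2 * ∑ i, Λ e i ^ 2 := by
    simp [hM, mul_pow, Finset.mul_sum]
  rw [this, hfe]
  have hc' := (hc e).ne'
  have hx2 : x e * x e ^ (1 - β) = x e ^ (2 - β) := by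
    rw [show (2:ℝ) - β = 1 + (1 - β) by ring, Real.rpow_add hpos, Real.rpow_one]
  rw [← hx2]
  field_simp
end
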